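/- arXiv:1011.4569 — 7 statements merged into one kernel-verified Lean document; each statement's English description precedes it below -/
import Mathlib

section
/- Let I be a type and Γ = (γ_{ik}) a matrix indexed by I × I with nonnegative real entries. Suppose there exist vectors s, t : I → ℝ with s_i > 0 for all i, such that for every i the sum ∑_k γ_{ik} s_k is at most t_i, and for every k the sum ∑_i γ_{ik} t_i is at most s_k, with t_i > 0 for all i. Then for all ξ, ζ ∈ ℓ²(I), |∑_{i,k} γ_{ik} ξ_k conj(ζ_i)| ≤ ‖ξ‖ ‖ζ‖; i.e., Γ defines a bounded operator on ℓ²(I) of norm at most 1. -/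
/-!
Schur test. Write `|Γ_{ik} ξ_k ζ_i|` as the geometric mean of `f_{ik} = Γ_{ik} s_k |ζ_i|² / t_i`
and `g_{ik} = Γ_{ik} t_i |ξ_k|² / s_k`. Summing `f` over `k` first, `Γ s ≤ t` gives
`∑ f ≤ ‖ζ‖²`; summing `g` over `i` first, `Γᵀ t ≤ s` gives `∑ g ≤ ‖ξ‖²`. Cauchy–Schwarz on
`I × I` then bounds the double sum by `√(∑ f) √(∑ g) ≤ ‖ξ‖ ‖ζ‖`.
-/

open scoped ComplexConjugate

theorem Real.summable_and_tsum_sqrt_mul_sqrt_le {ι : Type*} {f g : ι → ℝ}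
    (hf : ∀ i, 0 ≤ f i) (hg : ∀ i, 0 ≤ g i) (hf_sum : Summable f) (hg_sum : Summable g) :
    (Summable fun i => √(f i) * √(g i)) ∧
      ∑' i, √(f i) * √(g i) ≤ √(∑' i, f i) * √(∑' i, g i) := by
  have hnonneg : 0 ≤ fun i => √(f i) * √(g i) := fun i => by positivity
  have hfinite : ∀ u : Finset ι, ∑ i ∈ u, √(f i) * √(g i) ≤ √(∑' i, f i) * √(∑' i, g i) :=
    fun u => (Real.sum_sqrt_mul_sqrt_le u hf hg).trans <| by
      gcongr
      exacts [hf_sum.sum_le_tsum u fun i _ => hf i, hg_sum.sum_le_tsum u fun i _ => hg i]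
  exact ⟨summable_of_sum_le hnonneg hfinite, Real.tsum_le_of_sum_le hnonneg hfinite⟩

theorem summable_and_tsum_le_of_tsum_row_le {α β : Type*} {F : α × β → ℝ} {a : α → ℝ}
    (hF : 0 ≤ F) (hrow : ∀ x, Summable fun y => F (x, y)) (hle : ∀ x, ∑' y, F (x, y) ≤ a x)
    (ha : Summable a) : Summable F ∧ ∑' p, F p ≤ ∑' x, a x := by
  have hrows : Summable fun x => ∑' y, F (x, y) :=
    ha.of_nonneg_of_le (fun x => tsum_nonneg fun y => hF (x, y)) hle
  have hF_sum : Summable F := (summable_prod_of_nonneg hF).2 ⟨hrow, hrows⟩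
  exact ⟨hF_sum, hF_sum.tsum_prod.trans_le (hrows.tsum_le_tsum hle ha)⟩

theorem lp.hasSum_norm_sq {ι : Type*} {E : ι → Type*} [∀ i, NormedAddCommGroup (E i)]
    (f : lp E 2) : HasSum (fun i => ‖f i‖ ^ 2) (‖f‖ ^ 2) := by
  simpa using lp.hasSum_norm (by norm_num) f

section Schur

variable {I K : Type*} (γ : I → K → ℝ) (s : K → ℝ) (t : I → ℝ) {a : I → ℝ} {b : K → ℝ}

theorem summable_and_tsum_schur_row_le (hγ : ∀ i k, 0 ≤ γ i k) (hs : ∀ k, 0 ≤ s k)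
    (ht : ∀ i, 0 < t i) (hrow : ∀ i, Summable fun k => γ i k * s k)
    (hrow' : ∀ i, ∑' k, γ i k * s k ≤ t i) (ha : ∀ i, 0 ≤ a i) (ha_sum : Summable a) :
    (Summable fun p : I × K => γ p.1 p.2 * s p.2 * (a p.1 / t p.1)) ∧
      ∑' p : I × K, γ p.1 p.2 * s p.2 * (a p.1 / t p.1) ≤ ∑' i, a i := by
  refine summable_and_tsum_le_of_tsum_row_le ?nonneg ?rows ?rowSums ha_sum
  case rows =>
    intro i
    show Summable fun k => γ i k * s k * (a i / t i)
    exact (hrow i).mul_right _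
  case nonneg =>
    exact fun p => mul_nonneg (mul_nonneg (hγ _ _) (hs _)) (div_nonneg (ha _) (ht _).le)
  case rowSums =>
    intro i
    calc ∑' k, γ i k * s k * (a i / t i) = (∑' k, γ i k * s k) * (a i / t i) :=
            (hrow i).tsum_mul_right _
      _ ≤ t i * (a i / t i) := by gcongr; exacts [div_nonneg (ha i) (ht i).le, hrow' i]
      _ = a i := mul_div_cancel₀ _ (ht i).ne'

theorem summable_and_tsum_schur_col_le (hγ : ∀ i k, 0 ≤ γ i k) (ht : ∀ i, 0 ≤ t i)
    (hs : ∀ k, 0 < s k) (hcol : ∀ k, Summable fun i => γ i k * t i)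
    (hcol' : ∀ k, ∑' i, γ i k * t i ≤ s k) (hb : ∀ k, 0 ≤ b k) (hb_sum : Summable b) :
    (Summable fun p : I × K => γ p.1 p.2 * t p.1 * (b p.2 / s p.2)) ∧
      ∑' p : I × K, γ p.1 p.2 * t p.1 * (b p.2 / s p.2) ≤ ∑' k, b k := by
  obtain ⟨hsum, hle⟩ := summable_and_tsum_schur_row_le (fun k i => γ i k) t s
    (fun k i => hγ i k) ht hs hcol hcol' hb hb_sum
  exact ⟨(Equiv.prodComm I K).summable_iff.2 hsum, ((Equiv.prodComm I K).tsum_eq _).trans_le hle⟩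

end Schur

/-- Schur-test lemma: a matrix with nonnegative entries admitting strictly positive
weight vectors `s`, `t` with `Γ s ≤ t` and `Γᵀ t ≤ s` defines a contraction on `ℓ²(I)`. -/
theorem stmt_0 {I : Type*} (γ : I → I → ℝ) (s t : I → ℝ)
    (hγ : ∀ i k, 0 ≤ γ i k)
    (hs : ∀ i, 0 < s i) (ht : ∀ i, 0 < t i)
    (hrow : ∀ i, Summable fun k => γ i k * s k)
    (hrow' : ∀ i, (∑' k, γ i k * s k) ≤ t i)
    (hcol : ∀ k, Summable fun i => γ i k * t i)
    (hcol' : ∀ k, (∑' i, γ i k * t i) ≤ s k)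
    (ξ ζ : lp (fun _ : I => ℂ) 2) :
    ‖∑' p : I × I, (γ p.1 p.2 : ℂ) * ξ p.2 * conj (ζ p.1)‖ ≤ ‖ξ‖ * ‖ζ‖ := by
  set f : I × I → ℝ := fun p => γ p.1 p.2 * s p.2 * (‖ζ p.1‖ ^ 2 / t p.1)
  set g : I × I → ℝ := fun p => γ p.1 p.2 * t p.1 * (‖ξ p.2‖ ^ 2 / s p.2)
  obtain ⟨hf_sum, hf_le⟩ := summable_and_tsum_schur_row_le γ s t hγ (fun k => (hs k).le) ht
    hrow hrow' (fun i => sq_nonneg ‖ζ i‖) (lp.hasSum_norm_sq ζ).summable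
  obtain ⟨hg_sum, hg_le⟩ := summable_and_tsum_schur_col_le γ s t hγ (fun i => (ht i).le) hs
    hcol hcol' (fun k => sq_nonneg ‖ξ k‖) (lp.hasSum_norm_sq ξ).summable
  have hf : ∀ p, 0 ≤ f p := fun p =>
    mul_nonneg (mul_nonneg (hγ _ _) (hs _).le) (div_nonneg (sq_nonneg _) (ht _).le)
  have hg : ∀ p, 0 ≤ g p := fun p =>
    mul_nonneg (mul_nonneg (hγ _ _) (ht _).le) (div_nonneg (sq_nonneg _) (hs _).le)
  have hnorm : ∀ p : I × I, ‖(γ p.1 p.2 : ℂ) * ξ p.2 * conj (ζ p.1)‖ = √(f p) * √(g p) := by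
    rintro ⟨i, k⟩
    have hsk := (hs k).ne'
    have hti := (ht i).ne'
    rw [← Real.sqrt_mul (hf _), show f (i, k) * g (i, k) =
      (γ i k * ‖ξ k‖ * ‖ζ i‖) ^ 2 by simp only [f, g]; field_simp,
      Real.sqrt_sq (by have hγik := hγ i k; positivity)]
    simp [Complex.norm_real, abs_of_nonneg (hγ i k)]
  obtain ⟨hfg_sum, hfg_le⟩ := Real.summable_and_tsum_sqrt_mul_sqrt_le hf hg hf_sum hg_sum
  calc ‖∑' p : I × I, (γ p.1 p.2 : ℂ) * ξ p.2 * conj (ζ p.1)‖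
      ≤ ∑' p : I × I, ‖(γ p.1 p.2 : ℂ) * ξ p.2 * conj (ζ p.1)‖ :=
        norm_tsum_le_tsum_norm ((summable_congr hnorm).2 hfg_sum)
    _ ≤ √(∑' p, f p) * √(∑' p, g p) := (tsum_congr hnorm).trans_le hfg_le
    _ ≤ √(‖ζ‖ ^ 2) * √(‖ξ‖ ^ 2) := by
        rw [← (lp.hasSum_norm_sq ζ).tsum_eq, ← (lp.hasSum_norm_sq ξ).tsum_eq]
        gcongr
    _ = ‖ξ‖ * ‖ζ‖ := by rw [Real.sqrt_sq (norm_nonneg _), Real.sqrt_sq (norm_nonneg _), mul_comm]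
end

section
/- Let T be a self-adjoint bounded operator on a complex Hilbert space H with ‖T‖ = 1, and suppose T is given (in an orthonormal basis indexed by I) by a matrix with nonnegative real entries. Then 1 belongs to the spectrum of T. -/
/-!
Replacing `x` by its coordinatewise modulus `|x|` can only increase `|⟪T x, x⟫|` when the matrix
of `T` is entrywise nonnegative, and `‖|x|‖ = ‖x‖`; so `|R x| ≤ R |x|` for the Rayleigh quotient `R`.
If `1 = ‖T‖` were not in the spectrum, `R` would stay below `1 - ε`, hence so would `sup |R|`,
which equals `‖T‖` for self-adjoint `T`.
-/

open scoped lp ComplexOrder ENNReal InnerProductSpace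

section

variable {I : Type*}

noncomputable def absL2 (x : ℓ²(I, ℂ)) : ℓ²(I, ℂ) :=
  ⟨fun i => (‖x i‖ : ℂ), Memℓp.of_norm (by simpa using (lp.memℓp x).norm)⟩

@[simp]
lemma absL2_apply (x : ℓ²(I, ℂ)) (i : I) : absL2 x i = (‖x i‖ : ℂ) := rfl

@[simp]
lemma norm_absL2 (x : ℓ²(I, ℂ)) : ‖absL2 x‖ = ‖x‖ := by
  have h2 : 0 < (2 : ℝ≥0∞).toReal := by norm_num
  simp [lp.norm_eq_tsum_rpow h2]

variable [DecidableEq I]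

lemma hasSum_apply_single_mul (T : ℓ²(I, ℂ) →L[ℂ] ℓ²(I, ℂ)) (x : ℓ²(I, ℂ)) (i : I) :
    HasSum (fun j => T (lp.single 2 j 1) i * x j) (T x i) := by
  have h : HasSum (fun j => T (lp.single 2 j (x j)) i) (T x i) :=
    ((lp.hasSum_single (by simp) x).mapL T).mapL (lp.evalCLM ℂ _ 2 i)
  convert h using 2 with j
  have hsingle : lp.single (E := fun _ : I => ℂ) 2 j (x j) = x j • lp.single 2 j 1 := by
    rw [← lp.single_smul, smul_eq_mul, mul_one]
  simp [hsingle, mul_comm]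

lemma norm_apply_le_re_apply_absL2 {T : ℓ²(I, ℂ) →L[ℂ] ℓ²(I, ℂ)}
    (hT : ∀ i j, 0 ≤ T (lp.single 2 j 1) i) (x : ℓ²(I, ℂ)) (i : I) :
    ‖T x i‖ ≤ (T (absL2 x) i).re := by
  have hre : HasSum (fun j => ‖T (lp.single 2 j 1) i * x j‖) (T (absL2 x) i).re := by
    convert Complex.hasSum_re (hasSum_apply_single_mul T (absL2 x) i) using 2 with j
    obtain ⟨r, hr, hr'⟩ := RCLike.nonneg_iff_exists_ofReal.1 (hT i j)
    simp [← hr', abs_of_nonneg hr]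
  calc ‖T x i‖ = ‖∑' j, T (lp.single 2 j 1) i * x j‖ := by
        rw [(hasSum_apply_single_mul T x i).tsum_eq]
    _ ≤ ∑' j, ‖T (lp.single 2 j 1) i * x j‖ := norm_tsum_le_tsum_norm hre.summable
    _ = (T (absL2 x) i).re := hre.tsum_eq

lemma norm_inner_le_re_inner_absL2 {T : ℓ²(I, ℂ) →L[ℂ] ℓ²(I, ℂ)}
    (hT : ∀ i j, 0 ≤ T (lp.single 2 j 1) i) (x : ℓ²(I, ℂ)) :
    ‖⟪T x, x⟫_ℂ‖ ≤ (⟪T (absL2 x), absL2 x⟫_ℂ).re := by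
  have hre : HasSum (fun i => (T (absL2 x) i).re * ‖x i‖) (⟪T (absL2 x), absL2 x⟫_ℂ).re := by
    convert Complex.hasSum_re (lp.hasSum_inner (T (absL2 x)) (absL2 x)) using 2 with i
    simp [RCLike.inner_apply, Complex.mul_re, mul_comm]
  have hle : ∀ i, ‖⟪T x i, x i⟫_ℂ‖ ≤ (T (absL2 x) i).re * ‖x i‖ := fun i => by
    rw [RCLike.inner_apply, norm_mul, RCLike.norm_conj, mul_comm]
    exact mul_le_mul_of_nonneg_right (norm_apply_le_re_apply_absL2 hT x i) (norm_nonneg _)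
  have hsum : Summable fun i => ‖⟪T x i, x i⟫_ℂ‖ :=
    hre.summable.of_nonneg_of_le (fun _ => norm_nonneg _) hle
  calc ‖⟪T x, x⟫_ℂ‖ = ‖∑' i, ⟪T x i, x i⟫_ℂ‖ := by rw [lp.inner_eq_tsum]
    _ ≤ ∑' i, ‖⟪T x i, x i⟫_ℂ‖ := norm_tsum_le_tsum_norm hsum
    _ ≤ ∑' i, (T (absL2 x) i).re * ‖x i‖ := hsum.tsum_le_tsum hle hre.summable
    _ = (⟪T (absL2 x), absL2 x⟫_ℂ).re := hre.tsum_eq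

lemma abs_rayleighQuotient_le_rayleighQuotient_absL2 {T : ℓ²(I, ℂ) →L[ℂ] ℓ²(I, ℂ)}
    (hT : ∀ i j, 0 ≤ T (lp.single 2 j 1) i) (x : ℓ²(I, ℂ)) :
    |T.rayleighQuotient x| ≤ T.rayleighQuotient (absL2 x) := by
  simp only [ContinuousLinearMap.rayleighQuotient, ContinuousLinearMap.reApplyInnerSelf_apply,
    norm_absL2, abs_div, abs_pow, abs_norm, RCLike.re_to_complex]
  gcongr
  exact (Complex.abs_re_le_norm _).trans (norm_inner_le_re_inner_absL2 hT x)

end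

/-- A self-adjoint contraction of norm one on `ℓ²(I)` whose matrix entries
(in the standard orthonormal basis) are nonnegative reals has `1` in its spectrum. -/
theorem stmt_1 {I : Type*} [DecidableEq I]
    (T : lp (fun _ : I => ℂ) 2 →L[ℂ] lp (fun _ : I => ℂ) 2)
    (hT : IsSelfAdjoint T) (hnorm : ‖T‖ = 1)
    (hpos : ∀ i j : I, ∃ r : ℝ, 0 ≤ r ∧
      (inner ℂ (T (lp.single 2 j (1 : ℂ))) (lp.single 2 i (1 : ℂ)) : ℂ) = (r : ℂ)) :
    (1 : ℂ) ∈ spectrum ℂ T := by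
  have hentries : ∀ i j, 0 ≤ T (lp.single 2 j 1) i := fun i j => by
    obtain ⟨r, hr, hTr⟩ := hpos i j
    rw [lp.inner_single_right, RCLike.inner_apply, one_mul] at hTr
    rw [← Complex.conj_conj (T _ i), hTr, Complex.conj_ofReal]
    exact Complex.zero_le_real.2 hr
  have : Nontrivial ℓ²(I, ℂ) := by
    by_contra h
    rw [not_nontrivial_iff_subsingleton] at h
    simp [Subsingleton.elim T 0] at hnorm
  by_contra hnot
  obtain ⟨ε, hε, hle⟩ := T.rayleighQuotient_le_of_norm_mem_resolventSet <| by
    simpa [hnorm, spectrum.mem_resolventSet_iff, spectrum.notMem_iff] using hnot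
  have : ‖T‖ ≤ 1 - ε := by
    rw [T.norm_eq_iSup_rayleighQuotient hT.isSymmetric]
    exact ciSup_le fun x => by
      linarith [abs_rayleighQuotient_le_rayleighQuotient_absL2 hentries x, hle (absL2 x)]
  linarith
end

section
/- Let T be a bounded contraction on ℓ²(I), let e ∈ I, and suppose the vector δ_e is cyclic for the commutant of the unital C*-algebra A generated by T*T. Then ‖T‖² = lim_{n→∞} ((T*T)ⁿ δ_e, δ_e)^{1/n}. -/
/-!
With `P = T*T ≥ 0` and moments `m n = ⟪Pⁿ δ, δ⟫`, the bound `m n ≤ ‖P‖ⁿ` is immediate. Conversely,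
for `0 < M < ‖P‖` the operator `G = √(P - M)₊` is nonzero because `‖P‖ ∈ σ(P)`, and it lies in the
C*-algebra generated by `P`, so it commutes with the commutant of `P`; as `δ` is cyclic for that
commutant, `G δ ≠ 0`. Since `(x - M)₊ ≤ ‖P‖ (x / M)ⁿ on σ(P) ⊆ [0, ‖P‖]`, this gives
`0 < ‖G δ‖² ≤ ‖P‖ M⁻ⁿ m n`, i.e. `m n` grows at least like `Mⁿ`. Hence `m n ^ (1/n) → ‖P‖ = ‖T‖²`.
-/

open Filter Topology ContinuousLinearMap

lemma tendsto_const_rpow_inv_natCast {κ : ℝ} (hκ : 0 < κ) :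
    Tendsto (fun n : ℕ => κ ^ (n : ℝ)⁻¹) atTop (𝓝 1) := by
  simpa [Function.comp_def] using ((Real.continuousAt_const_rpow hκ.ne').tendsto).comp
    (tendsto_inv_atTop_zero.comp tendsto_natCast_atTop_atTop)

theorem tendsto_rpow_inv_of_geometric_bounds {m : ℕ → ℝ} {L : ℝ} (hm0 : ∀ n, 0 ≤ m n)
    (hmL : ∀ n, m n ≤ L ^ n) (hlow : ∀ M, 0 < M → M < L → ∃ κ > 0, ∀ n, κ * M ^ n ≤ m n) :
    Tendsto (fun n : ℕ => m n ^ (n : ℝ)⁻¹) atTop (𝓝 L) := by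
  have hL : 0 ≤ L := (hm0 1).trans (by simpa using hmL 1)
  refine tendsto_order.2 ⟨fun a ha => ?_, fun b hb => ?_⟩
  · rcases lt_or_ge a 0 with ha0 | ha0
    · exact .of_forall fun n => ha0.trans_le (Real.rpow_nonneg (hm0 n) _)
    obtain ⟨M, haM, hML⟩ := exists_between ha
    have hM : 0 < M := ha0.trans_lt haM
    obtain ⟨κ, hκ, hκm⟩ := hlow M hM hML
    have hroot : Tendsto (fun n : ℕ => κ ^ (n : ℝ)⁻¹ * M) atTop (𝓝 M) := by
      simpa using (tendsto_const_rpow_inv_natCast hκ).mul_const M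
    filter_upwards [hroot.eventually (lt_mem_nhds haM), eventually_ge_atTop 1] with n han hn
    calc a < κ ^ (n : ℝ)⁻¹ * M := han
      _ = (κ * M ^ n) ^ (n : ℝ)⁻¹ := by
        rw [Real.mul_rpow hκ.le (by positivity), Real.pow_rpow_inv_natCast hM.le (by omega)]
      _ ≤ m n ^ (n : ℝ)⁻¹ := Real.rpow_le_rpow (by positivity) (hκm n) (by positivity)
  · filter_upwards [eventually_ge_atTop 1] with n hn
    calc m n ^ (n : ℝ)⁻¹ ≤ (L ^ n) ^ (n : ℝ)⁻¹ :=
          Real.rpow_le_rpow (hm0 n) (hmL n) (by positivity)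
      _ = L := Real.pow_rpow_inv_natCast hL (by omega)
      _ < b := hb

section NormedSpace

variable {𝕜 E : Type*} [NontriviallyNormedField 𝕜] [NormedAddCommGroup E] [NormedSpace 𝕜 E]

theorem eq_zero_of_apply_eq_zero_of_dense_commutant {A B : E →L[𝕜] E} {v : E}
    (hcyc : Dense {x : E | ∃ S : E →L[𝕜] E, Commute S A ∧ S v = x})
    (hB : ∀ S : E →L[𝕜] E, Commute S A → Commute S B) (hBv : B v = 0) : B = 0 := by
  have hker : {x : E | ∃ S : E →L[𝕜] E, Commute S A ∧ S v = x} ⊆ {x | B x = 0} := by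
    rintro _ ⟨S, hS, rfl⟩
    rw [Set.mem_ofPred_eq, ← mul_apply_eq_comp, ← (hB S hS).eq, mul_apply_eq_comp, hBv, map_zero]
  ext x
  exact (isClosed_eq B.continuous continuous_const).closure_subset_iff.2 hker (hcyc x)

theorem norm_pow_apply_le (P : E →L[𝕜] E) (v : E) (n : ℕ) : ‖(P ^ n) v‖ ≤ ‖P‖ ^ n * ‖v‖ := by
  induction n with
  | zero => simp
  | succ n ih =>
    calc ‖(P ^ (n + 1)) v‖ = ‖P ((P ^ n) v)‖ := by rw [pow_succ', mul_apply_eq_comp]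
      _ ≤ ‖P‖ * (‖P‖ ^ n * ‖v‖) := P.le_opNorm_of_le ih
      _ = ‖P‖ ^ (n + 1) * ‖v‖ := by ring

end NormedSpace

section InnerProductSpace

variable {H : Type*} [NormedAddCommGroup H] [InnerProductSpace ℂ H]

theorem re_inner_pow_apply_self_le (P : H →L[ℂ] H) (v : H) (n : ℕ) :
    (inner ℂ ((P ^ n) v) v).re ≤ ‖P‖ ^ n * ‖v‖ ^ 2 :=
  calc (inner ℂ ((P ^ n) v) v).re ≤ ‖(P ^ n) v‖ * ‖v‖ :=
        (Complex.re_le_norm _).trans (norm_inner_le_norm _ _)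
    _ ≤ ‖P‖ ^ n * ‖v‖ * ‖v‖ := by gcongr; exact norm_pow_apply_le P v n
    _ = ‖P‖ ^ n * ‖v‖ ^ 2 := by ring

theorem re_inner_pow_apply_self_nonneg [CompleteSpace H] {P : H →L[ℂ] H} (hP : 0 ≤ P) (v : H)
    (n : ℕ) :
    0 ≤ (inner ℂ ((P ^ n) v) v).re :=
  ((nonneg_iff_isPositive _).1 (CStarAlgebra.pow_nonneg hP n)).re_inner_nonneg_left v

theorem re_inner_apply_self_mono {A B : H →L[ℂ] H} (h : A ≤ B) (v : H) :
    (inner ℂ (A v) v).re ≤ (inner ℂ (B v) v).re := by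
  have := ((le_def A B).1 h).re_inner_nonneg_left v
  rw [sub_apply, inner_sub_left, map_sub] at this
  exact sub_nonneg.1 this

theorem exists_mul_pow_le_re_inner_pow [CompleteSpace H] {P : H →L[ℂ] H} (hP : 0 ≤ P) {v : H}
    (hcyc : Dense {x : H | ∃ S : H →L[ℂ] H, Commute S P ∧ S v = x})
    {M : ℝ} (hM : 0 < M) (hMP : M < ‖P‖) :
    ∃ κ > 0, ∀ n, κ * M ^ n ≤ (inner ℂ ((P ^ n) v) v).re := by
  set g : ℝ → ℝ := fun x => √(max (x - M) 0)
  set G : H →L[ℂ] H := cfc g P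
  have hPpos : 0 < ‖P‖ := hM.trans hMP
  have : Nontrivial (H →L[ℂ] H) := nontrivial_of_ne P 0 (norm_pos_iff.1 hPpos)
  have hG : G ≠ 0 := by
    intro hG0
    rw [← cfc_zero ℝ P] at hG0
    have := (eqOn_of_cfc_eq_cfc hG0) (CStarAlgebra.norm_mem_spectrum_of_nonneg hP)
    simp only [g, Pi.zero_apply, Real.sqrt_eq_zero', max_le_iff, le_refl, and_true] at this
    linarith
  have hGv : G v ≠ 0 := fun hGv =>
    hG <| eq_zero_of_apply_eq_zero_of_dense_commutant hcyc
      (fun S hS => (hS.symm.cfc_real g).symm) hGv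
  have hGsq : ∀ n : ℕ, star G * G ≤ (‖P‖ * M⁻¹ ^ n) • P ^ n := fun n => by
    have hGG : star G * G = cfc (fun x => max (x - M) 0) P := by
      rw [(cfc_predicate g P : IsSelfAdjoint G).star_eq, ← cfc_mul g g P]
      exact cfc_congr fun x _ => Real.mul_self_sqrt (le_max_right _ _)
    rw [hGG, ← cfc_pow_id (R := ℝ) P n, ← cfc_const_mul (‖P‖ * M⁻¹ ^ n) (· ^ n : ℝ → ℝ) P]
    refine cfc_mono fun x hx => ?_
    obtain ⟨hx0, hxP⟩ : 0 ≤ x ∧ x ≤ ‖P‖ :=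
      ⟨spectrum_nonneg_of_nonneg hP hx, (le_abs_self x).trans (spectrum.norm_le_norm_of_mem hx)⟩
    rcases le_or_gt x M with hxM | hxM
    · rw [max_eq_right (by linarith)]; positivity
    · have : 1 ≤ (x / M) ^ n := one_le_pow₀ ((one_le_div hM).2 hxM.le)
      calc max (x - M) 0 ≤ ‖P‖ := max_le (by linarith) hPpos.le
        _ ≤ ‖P‖ * (x / M) ^ n := le_mul_of_one_le_right hPpos.le this
        _ = ‖P‖ * M⁻¹ ^ n * x ^ n := by ring
  refine ⟨‖G v‖ ^ 2 / ‖P‖, by positivity, fun n => ?_⟩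
  have hbound : ‖G v‖ ^ 2 ≤ ‖P‖ * M⁻¹ ^ n * (inner ℂ ((P ^ n) v) v).re :=
    calc ‖G v‖ ^ 2 = (inner ℂ ((star G * G) v) v).re := by
          rw [star_eq_adjoint, mul_apply_eq_comp, adjoint_inner_left, inner_self_eq_norm_sq_to_K]
          norm_cast
      _ ≤ (inner ℂ (((‖P‖ * M⁻¹ ^ n) • P ^ n) v) v).re := re_inner_apply_self_mono (hGsq n) v
      _ = ‖P‖ * M⁻¹ ^ n * (inner ℂ ((P ^ n) v) v).re := by
          rw [smul_apply, RCLike.real_smul_eq_coe_smul (K := ℂ), inner_smul_real_left,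
            Complex.real_smul, Complex.re_ofReal_mul]
  rw [div_mul_eq_mul_div, div_le_iff₀ hPpos]
  calc ‖G v‖ ^ 2 * M ^ n ≤ ‖P‖ * M⁻¹ ^ n * (inner ℂ ((P ^ n) v) v).re * M ^ n := by gcongr
    _ = (inner ℂ ((P ^ n) v) v).re * ‖P‖ := by rw [inv_pow]; field_simp

end InnerProductSpace

theorem stmt_2_general {I : Type*} [DecidableEq I]
    (T : lp (fun _ : I => ℂ) 2 →L[ℂ] lp (fun _ : I => ℂ) 2)
    (e : I)
    (hcyc : Dense {x : lp (fun _ : I => ℂ) 2 |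
      ∃ S : lp (fun _ : I => ℂ) 2 →L[ℂ] lp (fun _ : I => ℂ) 2,
        Commute S (adjoint T * T) ∧ S (lp.single 2 e (1 : ℂ)) = x}) :
    Tendsto
      (fun n : ℕ =>
        ((inner ℂ (((adjoint T * T) ^ n) (lp.single 2 e (1 : ℂ))) (lp.single 2 e (1 : ℂ)) : ℂ).re)
          ^ ((n : ℝ)⁻¹))
      atTop (nhds (‖T‖ ^ 2)) := by
  have hP : 0 ≤ adjoint T * T := by simpa [star_eq_adjoint] using star_mul_self_nonneg T
  have hnorm : ‖adjoint T * T‖ = ‖T‖ ^ 2 := (norm_adjoint_comp_self T).trans (sq _).symm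
  rw [← hnorm]
  refine tendsto_rpow_inv_of_geometric_bounds (re_inner_pow_apply_self_nonneg hP _)
    (fun n => (re_inner_pow_apply_self_le _ _ n).trans_eq ?_)
    (fun M hM hMP => exists_mul_pow_le_re_inner_pow hP hcyc hM hMP)
  rw [lp.norm_single (by norm_num), norm_one, one_pow, mul_one]

/-- For a contraction `T` on `ℓ²(I)` such that `δ_e` is cyclic for the commutant of the
C*-algebra generated by `T*T`, the norm of `T` squared is the limit of the `n`-th roots of
the moments `((T*T)^n δ_e, δ_e)`. -/
theorem stmt_2 {I : Type*} [Countable I] [DecidableEq I]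
    (T : lp (fun _ : I => ℂ) 2 →L[ℂ] lp (fun _ : I => ℂ) 2)
    (hcontr : ‖T‖ ≤ 1) (e : I)
    (hcyc : Dense {x : lp (fun _ : I => ℂ) 2 |
      ∃ S : lp (fun _ : I => ℂ) 2 →L[ℂ] lp (fun _ : I => ℂ) 2,
        Commute S (adjoint T * T) ∧ S (lp.single 2 e (1 : ℂ)) = x}) :
    Tendsto
      (fun n : ℕ =>
        ((inner ℂ (((adjoint T * T) ^ n) (lp.single 2 e (1 : ℂ))) (lp.single 2 e (1 : ℂ)) : ℂ).re)
          ^ ((n : ℝ)⁻¹))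
      atTop (nhds (‖T‖ ^ 2)) :=
  stmt_2_general T e hcyc
end

section
/- Let A be a finite abelian group. There exists a 2-cocycle c : A × A → ℂ* whose associated alternating bicharacter (a,b) ↦ c(a,b) c(b,a)⁻¹ is a nondegenerate pairing A × A → ℂ* if and only if A is isomorphic to H × H for some abelian group H. -/
/-!
Any 2-cocycle `c` on an abelian group `A` yields the alternating bicharacter
`β(x, y) = c(x, y) / c(y, x)`; conversely, for a perfect pairing `P` on `H`, the bicharacter
`c(x, y) = P(x₁, y₂)` on `H × H` is a cocycle whose `β` is nondegenerate. So the theorem reduces to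
showing that a finite abelian group with a nondegenerate alternating pairing `B` into the units of a
domain is of the form `H × H`. Take `a` of order `n = exp A`. Since `B` is injective, the character
`B a` has order `n`, and its image is cyclic, so some value `B a b` is a primitive `n`-th root of
unity; every value of `B` is an `n`-th root of unity, hence a power of `B a b`. Dividing by suitable
powers of `a` and `b` therefore splits `A = ⟨a⟩ × ⟨b⟩ × N` with `N` the common orthogonal of `a`
and `b`; both cyclic factors have order `n`, and `B` stays nondegenerate on `N`. Induct on `|A|`.
-/

open Subgroup

universe u

section Cocycle

variable {A M : Type*} [CommGroup A] [CommGroup M] {c : A → A → M}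

theorem cocycle_commutator_mul_right
    (hc : ∀ a b d : A, c a b * c (a * b) d = c b d * c a (b * d)) (x y z : A) :
    c x (y * z) / c (y * z) x = c x y / c y x * (c x z / c z x) := by
  have hyx : c (x * y) z / c y (x * z) = c x z / c y x := by
    rw [div_eq_div_iff_mul_eq_mul, mul_comm, mul_comm x y, hc]
  calc c x (y * z) / c (y * z) x
      = c y z * c x (y * z) / (c y z * c (y * z) x) := (mul_div_mul_left_eq_div _ _ _).symm
    _ = c x y / c z x * (c (x * y) z / c y (x * z)) := by
      rw [← hc, hc y z x, mul_comm z x, mul_div_mul_comm]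
    _ = c x y / c y x * (c x z / c z x) := by
      rw [hyx, div_mul_div_comm, div_mul_div_comm, mul_comm (c z x)]

def cocycleCommutator (hc : ∀ a b d : A, c a b * c (a * b) d = c b d * c a (b * d)) :
    A →* A →* M :=
  MonoidHom.mk' (fun x ↦ MonoidHom.mk' (fun y ↦ c x y / c y x) (cocycle_commutator_mul_right hc x))
    fun x y ↦ by
      ext z
      simp only [MonoidHom.mk'_apply, MonoidHom.mul_apply]
      rw [← inv_div, cocycle_commutator_mul_right hc, mul_inv, inv_div, inv_div]

end Cocycle

namespace MonoidHom

section Pairing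

variable {A M : Type*} [CommGroup A] [CommGroup M]

theorem cocycle_condition (B : A →* A →* M) (a b d : A) :
    B a b * B (a * b) d = B b d * B a (b * d) := by
  simp only [map_mul, mul_apply]
  rw [mul_comm (B b d), mul_assoc]

theorem map_zpow_left (B : A →* A →* M) (a b : A) (i : ℤ) : B (a ^ i) b = B a b ^ i :=
  map_zpow (B.flip b) a i

theorem apply_swap_eq_inv {B : A →* A →* M} (hB : ∀ a, B a a = 1) (x y : A) :
    B y x = (B x y)⁻¹ := by
  rw [eq_inv_iff_mul_eq_one, mul_comm]
  simpa [hB] using hB (x * y)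

def orthogonal (B : A →* A →* M) (a b : A) : Subgroup A :=
  (B.flip a).ker ⊓ (B.flip b).ker

variable {B : A →* A →* M}

theorem mem_orthogonal {a b x : A} : x ∈ B.orthogonal a b ↔ B x a = 1 ∧ B x b = 1 :=
  Iff.rfl

theorem apply_zpow_mul_zpow_mul_right (hB : ∀ x, B x x = 1) (a b : A) (i j : ℤ) (y : A) :
    B (a ^ i * b ^ j * y) b = B a b ^ i * B y b := by
  simp only [map_mul, mul_apply, map_zpow_left, hB, one_zpow, mul_one]

theorem apply_zpow_mul_zpow_mul_left (hB : ∀ x, B x x = 1) (a b : A) (i j : ℤ) (y : A) :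
    B (a ^ i * b ^ j * y) a = (B a b ^ j)⁻¹ * B y a := by
  simp only [map_mul, mul_apply, map_zpow_left, hB, one_zpow, one_mul, apply_swap_eq_inv hB a b,
    inv_zpow]

variable {a b : A}

theorem zpow_left_eq_one (hab : IsPrimitiveRoot (B a b) (Monoid.exponent A)) {i : ℤ}
    (h : B a b ^ i = 1) : a ^ i = 1 :=
  Group.exponent_dvd_iff_forall_zpow_eq_one.1 ((hab.zpow_eq_one_iff_dvd i).1 h) a

theorem zpow_right_eq_one (hab : IsPrimitiveRoot (B a b) (Monoid.exponent A)) {j : ℤ}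
    (h : B a b ^ j = 1) : b ^ j = 1 :=
  Group.exponent_dvd_iff_forall_zpow_eq_one.1 ((hab.zpow_eq_one_iff_dvd j).1 h) b

theorem orderOf_left_eq_exponent (hab : IsPrimitiveRoot (B a b) (Monoid.exponent A)) :
    orderOf a = Monoid.exponent A :=
  Nat.dvd_antisymm (Monoid.order_dvd_exponent a) <| hab.dvd_of_pow_eq_one _ <| by
    show B.flip b a ^ _ = 1
    rw [← map_pow, pow_orderOf_eq_one, map_one]

theorem orderOf_right_eq_exponent (hab : IsPrimitiveRoot (B a b) (Monoid.exponent A)) :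
    orderOf b = Monoid.exponent A :=
  Nat.dvd_antisymm (Monoid.order_dvd_exponent b) <| hab.dvd_of_pow_eq_one _ <| by
    rw [← map_pow, pow_orderOf_eq_one, map_one]

end Pairing

section Domain

variable {A : Type*} [CommGroup A] [Finite A] {K : Type*} [CommRing K] [IsDomain K]

theorem exists_orderOf_apply_eq_orderOf (χ : A →* Kˣ) : ∃ b, orderOf (χ b) = orderOf χ := by
  have : Finite χ.range := Set.finite_range χ |>.to_subtype
  obtain ⟨⟨_, b, rfl⟩, hb⟩ := IsCyclic.exists_generator (α := χ.range)
  refine ⟨b, Nat.dvd_antisymm (orderOf_dvd_of_pow_eq_one ?_) (orderOf_dvd_of_pow_eq_one ?_)⟩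
  · rw [← pow_apply, pow_orderOf_eq_one, one_apply]
  · refine DFunLike.ext _ _ fun d ↦ ?_
    obtain ⟨k, hk⟩ := hb ⟨χ d, d, rfl⟩
    have hk : χ b ^ k = χ d := congrArg Subtype.val hk
    rw [pow_apply, one_apply, ← hk, ← zpow_natCast, zpow_comm, zpow_natCast, pow_orderOf_eq_one,
      one_zpow]

variable {B : A →* A →* Kˣ}

theorem exists_isPrimitiveRoot_apply_apply (hnd : ∀ a, (∀ b, B a b = 1) → a = 1) :
    ∃ a b, IsPrimitiveRoot (B a b) (Monoid.exponent A) := by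
  obtain ⟨a, ha⟩ := Monoid.exists_orderOf_eq_exponent (Monoid.ExponentExists.of_finite (G := A))
  obtain ⟨b, hb⟩ := exists_orderOf_apply_eq_orderOf (B a)
  have hinj : Function.Injective B :=
    (injective_iff_map_eq_one B).2 fun x hx ↦ hnd x fun y ↦ by simp [hx]
  exact ⟨a, b, by rw [← ha, ← orderOf_injective B hinj, ← hb]; exact IsPrimitiveRoot.orderOf _⟩

variable {a b : A}

theorem apply_mem_zpowers (hab : IsPrimitiveRoot (B a b) (Monoid.exponent A)) (x y : A) :
    B x y ∈ zpowers (B a b) := by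
  have : NeZero (Monoid.exponent A) := ⟨Monoid.exponent_ne_zero_of_finite⟩
  rw [hab.zpowers_eq, mem_rootsOfUnity, ← map_pow, Monoid.pow_exponent_eq_one, map_one]

theorem exists_zpow_mul_zpow_mul_mem_orthogonal (hB : ∀ x, B x x = 1)
    (hab : IsPrimitiveRoot (B a b) (Monoid.exponent A)) (x : A) :
    ∃ i j : ℤ, ∃ y ∈ B.orthogonal a b, a ^ i * b ^ j * y = x := by
  obtain ⟨i, hi⟩ := mem_zpowers_iff.1 (apply_mem_zpowers hab x b)
  obtain ⟨j, hj⟩ := mem_zpowers_iff.1 (apply_mem_zpowers hab x a)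
  set y := (a ^ i * b ^ (-j))⁻¹ * x
  have hx : a ^ i * b ^ (-j) * y = x := mul_inv_cancel_left _ _
  refine ⟨i, -j, y, mem_orthogonal.2 ⟨?_, ?_⟩, hx⟩
  · have h := apply_zpow_mul_zpow_mul_left hB a b i (-j) y
    rwa [hx, ← hj, zpow_neg, inv_inv, left_eq_mul] at h
  · have h := apply_zpow_mul_zpow_mul_right hB a b i (-j) y
    rwa [hx, ← hi, left_eq_mul] at h

theorem nonempty_mulEquiv_prod_orthogonal (hB : ∀ x, B x x = 1)
    (hab : IsPrimitiveRoot (B a b) (Monoid.exponent A)) :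
    Nonempty (A ≃* (zpowers a × zpowers b) × B.orthogonal a b) := by
  let Φ := ((zpowers a).subtype.coprod (zpowers b).subtype).coprod (B.orthogonal a b).subtype
  refine ⟨(MulEquiv.ofBijective Φ ⟨(injective_iff_map_eq_one Φ).2 ?_, fun x ↦ ?_⟩).symm⟩
  · rintro ⟨⟨⟨_, i, rfl⟩, ⟨_, j, rfl⟩⟩, y⟩ h
    change a ^ i * b ^ j * y = 1 at h
    obtain ⟨hya, hyb⟩ := mem_orthogonal.1 y.2
    have hi : a ^ i = 1 := zpow_left_eq_one hab <| by
      simpa [h, hyb] using (apply_zpow_mul_zpow_mul_right hB a b i j y).symm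
    have hj : b ^ j = 1 := zpow_right_eq_one hab <| by
      simpa [h, hya] using apply_zpow_mul_zpow_mul_left hB a b i j y
    have hy : y = 1 := Subtype.ext <| by simpa [hi, hj] using h
    simp only [hi, hj, hy]
    rfl
  · obtain ⟨i, j, y, hy, rfl⟩ := exists_zpow_mul_zpow_mul_mem_orthogonal hB hab x
    exact ⟨((⟨_, zpow_mem_zpowers a i⟩, ⟨_, zpow_mem_zpowers b j⟩), ⟨y, hy⟩), rfl⟩

theorem eq_one_of_mem_orthogonal (hB : ∀ x, B x x = 1)
    (hab : IsPrimitiveRoot (B a b) (Monoid.exponent A)) (hnd : ∀ x, (∀ y, B x y = 1) → x = 1)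
    {x : A} (hx : x ∈ B.orthogonal a b) (h : ∀ y ∈ B.orthogonal a b, B x y = 1) : x = 1 :=
  hnd x fun y ↦ by
    obtain ⟨i, j, z, hz, rfl⟩ := exists_zpow_mul_zpow_mul_mem_orthogonal hB hab y
    obtain ⟨hxa, hxb⟩ := mem_orthogonal.1 hx
    simp [hxa, hxb, h z hz]

end Domain

end MonoidHom

open MonoidHom in
theorem exists_mulEquiv_prod_self_of_alternating_nondegenerate {A : Type u} [CommGroup A]
    [Finite A] {K : Type*} [CommRing K] [IsDomain K] (B : A →* A →* Kˣ) (hB : ∀ x, B x x = 1)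
    (hnd : ∀ x, (∀ y, B x y = 1) → x = 1) :
    ∃ (H : Type u) (_ : CommGroup H), Nonempty (A ≃* H × H) := by
  induction h : Nat.card A using Nat.strong_induction_on generalizing A with
  | _ n ih =>
  rcases subsingleton_or_nontrivial A with hA | hA
  · have : Unique A := uniqueOfSubsingleton 1
    exact ⟨A, inferInstance, ⟨MulEquiv.prodUnique.symm⟩⟩
  obtain ⟨a, b, hab⟩ := exists_isPrimitiveRoot_apply_apply hnd
  set N := B.orthogonal a b
  have hlt : Nat.card N < n := h ▸ Finite.card_subtype_lt (x := a) fun ha ↦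
    hab.ne_one Monoid.one_lt_exponent (mem_orthogonal.1 ha).2
  obtain ⟨H, _, ⟨eN⟩⟩ := ih _ hlt ((B.comp N.subtype).compl₂ N.subtype) (fun x ↦ hB x)
    (fun x hx ↦ Subtype.ext (eq_one_of_mem_orthogonal hB hab hnd x.2 fun y hy ↦ hx ⟨y, hy⟩)) rfl
  obtain ⟨e⟩ := nonempty_mulEquiv_prod_orthogonal hB hab
  have eab : zpowers b ≃* zpowers a := mulEquivOfCyclicCardEq <| by
    rw [Nat.card_zpowers, Nat.card_zpowers, orderOf_left_eq_exponent hab,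
      orderOf_right_eq_exponent hab]
  exact ⟨zpowers a × H, inferInstance, ⟨e.trans <| (((MulEquiv.refl _).prodCongr eab).prodCongr
    eN).trans (MulEquiv.prodProdProdComm _ _ _ _)⟩⟩

section NondegeneratePairing

variable {H : Type*} [CommGroup H] [Finite H] {K : Type*} [CommMonoid K]
  [HasEnoughRootsOfUnity K (Monoid.exponent H)]

theorem exists_nondegenerate_pairing :
    ∃ P : H →* H →* Kˣ, (∀ g, (∀ h, P g h = 1) → g = 1) ∧ ∀ h, (∀ g, P g h = 1) → h = 1 := by
  obtain ⟨ι⟩ := CommGroup.monoidHom_mulEquiv_of_hasEnoughRootsOfUnity H K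
  refine ⟨ι.symm.toMonoidHom, fun g hg ↦ (MulEquiv.map_eq_one_iff ι.symm).1 (MonoidHom.ext hg),
    fun h hh ↦ ?_⟩
  by_contra hne
  obtain ⟨ψ, hψ⟩ := CommGroup.exists_apply_ne_one_of_hasEnoughRootsOfUnity H K hne
  exact hψ (by simpa using hh (ι ψ))

theorem exists_nondegenerate_cocycle_of_mulEquiv_prod_self {A : Type*} [CommGroup A]
    (e : A ≃* H × H) :
    ∃ c : A → A → Kˣ, (∀ a b d : A, c a b * c (a * b) d = c b d * c a (b * d)) ∧
      (∀ a : A, (∀ b : A, c a b * (c b a)⁻¹ = 1) → a = 1) := by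
  obtain ⟨P, hl, hr⟩ := exists_nondegenerate_pairing (H := H) (K := K)
  let Q : A →* A →* Kˣ := (P.comp ((MonoidHom.fst H H).comp e.toMonoidHom)).compl₂
    ((MonoidHom.snd H H).comp e.toMonoidHom)
  refine ⟨fun x y ↦ Q x y, Q.cocycle_condition, fun x hx ↦ (MulEquiv.map_eq_one_iff e).1 ?_⟩
  refine Prod.ext (hl _ fun k ↦ ?_) (hr _ fun g ↦ ?_)
  · simpa [Q] using hx (e.symm (1, k))
  · simpa [Q] using hx (e.symm (g, 1))

end NondegeneratePairing

/-- A finite abelian group `A` carries a 2-cocycle with values in `ℂ*` whose associated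
alternating bicharacter `(a,b) ↦ c(a,b)c(b,a)⁻¹` is nondegenerate if and only if
`A ≅ H × H` for some abelian group `H`. -/
theorem stmt_4 {A : Type} [CommGroup A] [Fintype A] :
    (∃ c : A → A → ℂˣ,
      (∀ a b d : A, c a b * c (a * b) d = c b d * c a (b * d)) ∧
      (∀ a : A, (∀ b : A, c a b * (c b a)⁻¹ = 1) → a = 1)) ↔
    ∃ (H : Type) (_ : CommGroup H), Nonempty (A ≃* H × H) := by
  constructor
  · rintro ⟨c, hc, hnd⟩
    refine exists_mulEquiv_prod_self_of_alternating_nondegenerate (cocycleCommutator hc)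
      (fun x ↦ div_self' _) fun x hx ↦ hnd x fun y ↦ ?_
    simpa [cocycleCommutator, div_eq_mul_inv] using hx y
  · rintro ⟨H, _, ⟨e⟩⟩
    have := Finite.of_equiv A e.toEquiv
    have : Finite H := Finite.prod_left H
    have : NeZero (Monoid.exponent H : ℂ) :=
      ⟨Nat.cast_ne_zero.2 Monoid.exponent_ne_zero_of_finite⟩
    exact exists_nondegenerate_cocycle_of_mulEquiv_prod_self e
end

section
/- Let G be a finite group, c : G × G → ℂ* a 2-cocycle, and let ℂ_c[G] denote the twisted group algebra with basis {u_g} and multiplication u_g u_h = c(g,h) u_{gh}. Then the center of ℂ_c[G] is trivial (equal to ℂ·1) if and only if for every g ≠ e there exists h in the centralizer C(g) of g with c(g,h) ≠ c(h,g). -/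
open Finset

/-- Multiplication of the twisted group algebra `ℂ_c[G]`, with elements written as
functions `G → ℂ` relative to the basis `{u_g}`: `u_g u_h = c(g,h) u_{gh}`. -/
noncomputable def twMul {G : Type*} [Group G] [Fintype G] (c : G → G → ℂˣ)
    (x y : G → ℂ) : G → ℂ :=
  fun k => ∑ g : G, x g * y (g⁻¹ * k) * (c g (g⁻¹ * k) : ℂ)

/-- From centrality, the commutation relation with basis elements. -/
lemma comm_of_central {G : Type*} [Group G] [Fintype G] (c : G → G → ℂˣ)
    (x : G → ℂ) (hx : ∀ y : G → ℂ, twMul c x y = twMul c y x) (g h : G) :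
    x g * (c g h : ℂ) = x (h⁻¹ * g * h) * (c h (h⁻¹ * g * h) : ℂ) := by
  classical
  have key := congrFun (hx (fun a => if a = h then (1:ℂ) else 0)) (g * h)
  unfold twMul at key
  have L : (∑ a : G, x a * (if a⁻¹ * (g * h) = h then (1:ℂ) else 0) * (c a (a⁻¹ * (g * h)) : ℂ))
      = x g * (c g h : ℂ) := by
    rw [Finset.sum_eq_single g]
    · have hgh : g⁻¹ * (g * h) = h := by group
      simp [hgh]
    · intro a _ ha
      have hne : a⁻¹ * (g * h) ≠ h := by
        intro hh
        have h3 : g * h = a * h := by simpa using congrArg (a * ·) hh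
        exact ha (mul_right_cancel h3.symm)
      simp [hne]
    · simp
  have R : (∑ a : G, (if a = h then (1:ℂ) else 0) * x (a⁻¹ * (g * h)) * (c a (a⁻¹ * (g * h)) : ℂ))
      = x (h⁻¹ * g * h) * (c h (h⁻¹ * g * h) : ℂ) := by
    rw [Finset.sum_eq_single h]
    · have hh : h⁻¹ * (g * h) = h⁻¹ * g * h := by group
      simp [hh]
    · intro a _ ha; simp [ha]
    · simp
  simp only [L, R] at key
  exact key

/-- From the commutation relation, centrality. -/
lemma central_of_comm {G : Type*} [Group G] [Fintype G] (c : G → G → ℂˣ)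
    (x : G → ℂ)
    (hx : ∀ g t : G, x g * (c g t : ℂ) = x (t⁻¹ * g * t) * (c t (t⁻¹ * g * t) : ℂ)) :
    ∀ y : G → ℂ, twMul c x y = twMul c y x := by
  intro y
  funext k
  unfold twMul
  refine Finset.sum_nbij' (fun g => g⁻¹ * k) (fun a => k * a⁻¹) (by simp) (by simp)
    (fun a _ => by simp [mul_inv_rev, ← mul_assoc]) (fun a _ => by simp [mul_inv_rev, ← mul_assoc])
    ?_
  intro g _
  have e : (g⁻¹ * k)⁻¹ * k = (g⁻¹ * k)⁻¹ * g * (g⁻¹ * k) := by group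
  rw [e]
  linear_combination y (g⁻¹ * k) * hx g (g⁻¹ * k)

/-- The key cocycle identity used to show the twisted class sum is central. -/
lemma key_cocycle {G : Type*} [Group G] (c : G → G → ℂˣ)
    (hcoc : ∀ a b d : G, c a b * c (a * b) d = c b d * c a (b * d))
    (g₀ h g t : G) (hg : h⁻¹ * g₀ * h = g) :
    (c g₀ h : ℂ) * ((c h g : ℂ))⁻¹ * (c g t : ℂ)
      = (c g₀ (h * t) : ℂ) * ((c (h * t) (t⁻¹ * g * t) : ℂ))⁻¹ * (c t (t⁻¹ * g * t) : ℂ) := by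
  have hgh : g₀ * h = h * g := by rw [← hg]; group
  have e1 : (c g₀ h : ℂ) * (c (h * g) t : ℂ) = (c h t : ℂ) * (c g₀ (h * t) : ℂ) := by
    have := hcoc g₀ h t; rw [hgh] at this; exact_mod_cast congrArg Units.val this
  have e2 : (c h g : ℂ) * (c (h * g) t : ℂ) = (c g t : ℂ) * (c h (g * t) : ℂ) :=
    congrArg Units.val (hcoc h g t)
  have e3 : (c h t : ℂ) * (c (h * t) (t⁻¹ * g * t) : ℂ)
      = (c t (t⁻¹ * g * t) : ℂ) * (c h (g * t) : ℂ) := by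
    have ht : t * (t⁻¹ * g * t) = g * t := by group
    have := hcoc h t (t⁻¹ * g * t); rw [ht] at this
    exact_mod_cast congrArg Units.val this
  have main : ∀ a b s r v w u p q : ℂ, b ≠ 0 → v ≠ 0 → q ≠ 0 →
      a * p = q * r → b * p = s * u → q * v = w * u →
      a * b⁻¹ * s = r * v⁻¹ * w := by
    intro a b s r v w u p q hb hv hq e1 e2 e3
    field_simp
    apply mul_left_cancel₀ hq
    linear_combination (w * b) * e1 - (a * w) * e2 + (a * s) * e3
  exact main _ _ _ _ _ _ _ _ _ (Units.ne_zero _) (Units.ne_zero _) (Units.ne_zero _) e1 e2 e3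

/-- The center of the twisted group algebra `ℂ_c[G]` of a finite group `G` is trivial
(i.e. every central element is supported at the identity, so equals a scalar multiple of
`u_e = 1`) if and only if for every `g ≠ e` there is `h` in the centralizer of `g`
with `c(g,h) ≠ c(h,g)`. -/
theorem stmt_6 {G : Type*} [Group G] [Fintype G] (c : G → G → ℂˣ)
    (hcoc : ∀ a b d : G, c a b * c (a * b) d = c b d * c a (b * d))
    (hnorm : ∀ g : G, c 1 g = 1 ∧ c g 1 = 1) :
    (∀ x : G → ℂ, (∀ y : G → ℂ, twMul c x y = twMul c y x) →
        ∀ g : G, g ≠ 1 → x g = 0) ↔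
    (∀ g : G, g ≠ 1 → ∃ h : G, Commute g h ∧ c g h ≠ c h g) := by
  classical
  constructor
  · intro hcen
    by_contra hcon
    push_neg at hcon
    obtain ⟨g₀, hg₀, hall⟩ := hcon
    -- build the twisted class sum
    set x : G → ℂ := fun k =>
      ∑ h ∈ Finset.univ.filter (fun h : G => h⁻¹ * g₀ * h = k),
        (c g₀ h : ℂ) * ((c h k : ℂ))⁻¹ with hxdef
    have hcomm : ∀ g t : G, x g * (c g t : ℂ) = x (t⁻¹ * g * t) * (c t (t⁻¹ * g * t) : ℂ) := by
      intro g t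
      rw [hxdef]
      simp only
      rw [Finset.sum_mul, Finset.sum_mul]
      refine Finset.sum_nbij' (fun h => h * t) (fun h => h * t⁻¹) ?_ ?_ ?_ ?_ ?_
      · intro a ha
        simp only [Finset.mem_filter, Finset.mem_univ, true_and] at ha ⊢
        rw [← ha]; group
      · intro a ha
        simp only [Finset.mem_filter, Finset.mem_univ, true_and] at ha ⊢
        rw [show g = t * (a⁻¹ * g₀ * a) * t⁻¹ by rw [ha]; group]
        group
      · intro a _; group
      · intro a _; group
      · intro h hh
        simp only [Finset.mem_filter, Finset.mem_univ, true_and] at hh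
        exact key_cocycle c hcoc g₀ h g t hh
    have hcentral := central_of_comm c x hcomm
    have hx0 := hcen x hcentral g₀ hg₀
    -- but x g₀ = card of centralizer ≠ 0
    have hval : x g₀ = (Finset.univ.filter (fun h : G => h⁻¹ * g₀ * h = g₀)).card := by
      rw [hxdef]
      simp only
      rw [Finset.card_eq_sum_ones, Nat.cast_sum]
      refine Finset.sum_congr rfl ?_
      intro h hh
      simp only [Finset.mem_filter, Finset.mem_univ, true_and] at hh
      have hcommute : Commute g₀ h := by
        show g₀ * h = h * g₀
        calc g₀ * h = h * (h⁻¹ * g₀ * h) := by group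
        _ = h * g₀ := by rw [hh]
      have := hall h hcommute
      rw [this]
      simp [mul_inv_cancel₀ (Units.ne_zero (c h g₀))]
    have hpos : (0:ℂ) ≠ x g₀ := by
      rw [hval]
      have h1 : (1:G) ∈ Finset.univ.filter (fun h : G => h⁻¹ * g₀ * h = g₀) := by simp
      have := Finset.card_pos.mpr ⟨1, h1⟩
      exact_mod_cast (Nat.cast_pos.mpr this).ne
    exact hpos hx0.symm
  · intro hchar x hx g hg
    obtain ⟨h, hcommute, hne⟩ := hchar g hg
    have key := comm_of_central c x hx g h
    have hgh : h⁻¹ * g * h = g := by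
      calc h⁻¹ * g * h = h⁻¹ * (g * h) := by group
      _ = h⁻¹ * (h * g) := by rw [hcommute.eq]
      _ = g := by group
    rw [hgh] at key
    have hterm : (c g h : ℂ) ≠ (c h g : ℂ) := fun hh => hne (Units.ext hh)
    have : x g * ((c g h : ℂ) - (c h g : ℂ)) = 0 := by linear_combination key
    rcases mul_eq_zero.mp this with h0 | h0
    · exact h0
    · exact absurd (sub_eq_zero.mp h0) hterm
end

section
/- Let A be a finite-dimensional quasitriangular Hopf algebra with R-matrix R satisfying the Yang–Baxter equation R₁₂R₁₃R₂₃ = R₂₃R₁₃R₁₂, and assume R is invertible in A ⊗ A^op (i.e., (id ⊗ S)(R) is a two-sided inverse of R in A ⊗ A^op). Then U_r U_l ⊆ U_l U_r, where U_l and U_r are the spans of left- and right-leg slices of R; hence U_R = U_l U_r is a subalgebra of A. -/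
open TensorProduct

section

variable (k : Type*) {A : Type*} [CommSemiring k] [Semiring A] [Bialgebra k A]

/-- The leg embedding `R ↦ R₁₂ = R ⊗ 1` of `A ⊗ A` into `(A ⊗ A) ⊗ A`. -/
noncomputable def leg12 (R : A ⊗[k] A) : (A ⊗[k] A) ⊗[k] A := R ⊗ₜ[k] (1 : A)

/-- The leg embedding `R ↦ R₁₃` of `A ⊗ A` into `(A ⊗ A) ⊗ A`, `a ⊗ b ↦ (a ⊗ 1) ⊗ b`. -/
noncomputable def leg13 (R : A ⊗[k] A) : (A ⊗[k] A) ⊗[k] A :=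
  Algebra.TensorProduct.map
    (Algebra.TensorProduct.includeLeft : A →ₐ[k] A ⊗[k] A) (AlgHom.id k A) R

/-- The leg embedding `R ↦ R₂₃` of `A ⊗ A` into `(A ⊗ A) ⊗ A`, `a ⊗ b ↦ (1 ⊗ a) ⊗ b`. -/
noncomputable def leg23 (R : A ⊗[k] A) : (A ⊗[k] A) ⊗[k] A :=
  Algebra.TensorProduct.map
    (Algebra.TensorProduct.includeRight : A →ₐ[k] A ⊗[k] A) (AlgHom.id k A) R

/-- The span `U_l` of the left-leg slices `(ω ⊗ id)(R)`, `ω ∈ A*`. -/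
noncomputable def Ul (R : A ⊗[k] A) : Submodule k A :=
  Submodule.span k {x : A | ∃ ω : Module.Dual k A,
    x = TensorProduct.lid k A (TensorProduct.map ω LinearMap.id R)}

/-- The span `U_r` of the right-leg slices `(id ⊗ η)(R)`, `η ∈ A*`. -/
noncomputable def Ur (R : A ⊗[k] A) : Submodule k A :=
  Submodule.span k {x : A | ∃ η : Module.Dual k A,
    x = TensorProduct.rid k A (TensorProduct.map LinearMap.id η R)}

end

/-- Image `R̃` of `R` in `A ⊗ Aᵒᵖ`. -/
noncomputable def legOp {k A : Type*} [CommSemiring k] [Semiring A] [Bialgebra k A]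
    (R : A ⊗[k] A) : A ⊗[k] Aᵐᵒᵖ :=
  TensorProduct.map LinearMap.id (MulOpposite.opLinearEquiv k).toLinearMap R

/-- The would-be inverse `(id ⊗ S)(R)` of `R̃` in `A ⊗ Aᵒᵖ`. -/
noncomputable def legOpS {k A : Type*} [CommSemiring k] [Semiring A] [HopfAlgebra k A]
    (R : A ⊗[k] A) : A ⊗[k] Aᵐᵒᵖ :=
  TensorProduct.map LinearMap.id
    ((MulOpposite.opLinearEquiv k).toLinearMap ∘ₗ HopfAlgebra.antipode (R := k)) R

/-!
Slicing a product of legs of `R` gives a product of slices, so the hexagon identities make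
`U_l` and `U_r` closed under multiplication; applying the counit to a leg of a hexagon identity
shows that `(ε ⊗ id)(R)` and `(id ⊗ ε)(R)` are idempotent units, hence `1`.

For `U_r U_l ⊆ U_l U_r`, reverse the multiplication of the third leg: the Yang–Baxter equation
becomes `R₁₂ R̃₂₃ R̃₁₃ = R̃₁₃ R̃₂₃ R₁₂` in `(A ⊗ A) ⊗ Aᵒᵖ` (the paper's `A ⊗ Aᵒᵖ ⊗ A` with the last
two legs swapped), where `R̃ = (id ⊗ op)(R)` has a left inverse `S`. Hence
`R̃₂₃ R₁₂ = S₁₃ R₁₂ R̃₂₃ R̃₁₃`. Slicing legs `1` and `3` with `ω ⊗ η` turns the left side into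
`(id ⊗ η)(R) (ω ⊗ id)(R)` and the right side into a slice of `R₁₂ R̃₂₃` by another functional,
which lies in `U_l U_r` since every functional on the finite-dimensional `A ⊗ Aᵒᵖ` is a sum of
functionals `ω' ⊗ η'`.
-/

open TensorProduct MulOpposite

namespace RMatrix

section Slice

variable {k M N A : Type*} [CommSemiring k] [AddCommMonoid M] [Module k M]
  [AddCommMonoid N] [Module k N] [AddCommMonoid A] [Module k A]

noncomputable def sliceFst (χ : Module.Dual k M) : M ⊗[k] A →ₗ[k] A :=
  TensorProduct.lid k A ∘ₗ χ.rTensor A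

noncomputable def sliceSnd (χ : Module.Dual k M) : A ⊗[k] M →ₗ[k] A :=
  TensorProduct.rid k A ∘ₗ χ.lTensor A

@[simp] lemma sliceFst_tmul (χ : Module.Dual k M) (m : M) (a : A) :
    sliceFst χ (m ⊗ₜ[k] a) = χ m • a := by
  simp [sliceFst]

@[simp] lemma sliceSnd_tmul (χ : Module.Dual k M) (a : A) (m : M) :
    sliceSnd χ (a ⊗ₜ[k] m) = χ m • a := by
  simp [sliceSnd]

lemma sliceFst_zero : (sliceFst 0 : M ⊗[k] A →ₗ[k] A) = 0 := by
  simp [sliceFst]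

lemma sliceFst_add (χ χ' : Module.Dual k M) :
    (sliceFst (χ + χ') : M ⊗[k] A →ₗ[k] A) = sliceFst χ + sliceFst χ' := by
  simp [sliceFst, LinearMap.rTensor_add, LinearMap.comp_add]

lemma sliceFst_rTensor (χ : Module.Dual k M) (f : N →ₗ[k] M) (t : N ⊗[k] A) :
    sliceFst χ (f.rTensor A t) = sliceFst (χ ∘ₗ f) t := by
  simp [sliceFst, LinearMap.rTensor_comp_apply]

lemma sliceSnd_lTensor (χ : Module.Dual k M) (f : N →ₗ[k] M) (t : A ⊗[k] N) :
    sliceSnd χ (f.lTensor A t) = sliceSnd (χ ∘ₗ f) t := by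
  simp [sliceSnd, LinearMap.lTensor_comp_apply]

end Slice

lemma span_mul_span_le {k A : Type*} [CommSemiring k] [Semiring A] [Algebra k A]
    {S T : Set A} {P : Submodule k A} (h : ∀ x ∈ S, ∀ y ∈ T, x * y ∈ P) :
    Submodule.span k S * Submodule.span k T ≤ P := by
  rw [Submodule.span_mul_span, Submodule.span_le]
  exact Set.mul_subset_iff.2 h

section Embed

variable {k M N P : Type*} [CommSemiring k] [Semiring M] [Algebra k M] [Semiring N] [Algebra k N]
  [Semiring P] [Algebra k P]

noncomputable def embed13 : M ⊗[k] P →ₐ[k] (M ⊗[k] N) ⊗[k] P :=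
  Algebra.TensorProduct.map Algebra.TensorProduct.includeLeft (AlgHom.id k P)

noncomputable def embed23 : N ⊗[k] P →ₐ[k] (M ⊗[k] N) ⊗[k] P :=
  Algebra.TensorProduct.map Algebra.TensorProduct.includeRight (AlgHom.id k P)

@[simp] lemma embed13_tmul (m : M) (p : P) :
    (embed13 (m ⊗ₜ[k] p) : (M ⊗[k] N) ⊗[k] P) = (m ⊗ₜ[k] 1) ⊗ₜ[k] p := rfl

@[simp] lemma embed23_tmul (n : N) (p : P) :
    (embed23 (n ⊗ₜ[k] p) : (M ⊗[k] N) ⊗[k] P) = (1 ⊗ₜ[k] n) ⊗ₜ[k] p := rfl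

lemma sliceFst_rightComm_embed13_mul_mul (χ : Module.Dual k (M ⊗[k] P)) (x y : M ⊗[k] P)
    (t : (M ⊗[k] N) ⊗[k] P) :
    sliceFst χ (TensorProduct.rightComm k M N P (embed13 x * t * embed13 y)) =
      sliceFst (χ ∘ₗ LinearMap.mulRight k y ∘ₗ LinearMap.mulLeft k x)
        (TensorProduct.rightComm k M N P t) := by
  induction t using TensorProduct.induction_on with
  | zero => simp
  | add t₁ t₂ h₁ h₂ => simp only [mul_add, add_mul, map_add, h₁, h₂]
  | tmul mn p =>
    induction mn using TensorProduct.induction_on with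
    | zero => simp
    | add s₁ s₂ h₁ h₂ => simp only [add_tmul, mul_add, add_mul, map_add, h₁, h₂]
    | tmul m n =>
      simp only [rightComm_tmul, sliceFst_tmul, LinearMap.comp_apply, LinearMap.mulLeft_apply,
        LinearMap.mulRight_apply]
      induction x using TensorProduct.induction_on with
      | zero => simp
      | add x₁ x₂ h₁ h₂ => simp only [map_add, add_mul, add_smul, h₁, h₂]
      | tmul m' p' =>
        induction y using TensorProduct.induction_on with
        | zero => simp
        | add y₁ y₂ h₁ h₂ => simp only [map_add, mul_add, add_smul, h₁, h₂]
        | tmul m'' p'' => simp [mul_assoc]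

end Embed

section Bialgebra

variable {k A : Type*} [CommSemiring k] [Semiring A] [Bialgebra k A]

lemma sliceFst_mem_Ul (R : A ⊗[k] A) (ω : Module.Dual k A) : sliceFst ω R ∈ Ul k R :=
  Submodule.subset_span ⟨ω, rfl⟩

lemma sliceSnd_mem_Ur (R : A ⊗[k] A) (η : Module.Dual k A) : sliceSnd η R ∈ Ur k R :=
  Submodule.subset_span ⟨η, rfl⟩

@[simp] lemma leg12_tmul (a b : A) : leg12 k (a ⊗ₜ[k] b) = (a ⊗ₜ[k] b) ⊗ₜ[k] (1 : A) := rfl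

@[simp] lemma leg13_tmul (a b : A) : leg13 k (a ⊗ₜ[k] b) = (a ⊗ₜ[k] (1 : A)) ⊗ₜ[k] b := rfl

@[simp] lemma leg23_tmul (a b : A) : leg23 k (a ⊗ₜ[k] b) = ((1 : A) ⊗ₜ[k] a) ⊗ₜ[k] b := rfl

@[simp] lemma leg12_zero : leg12 k (0 : A ⊗[k] A) = 0 := zero_tmul _ _

@[simp] lemma leg13_zero : leg13 k (0 : A ⊗[k] A) = 0 := map_zero _

@[simp] lemma leg23_zero : leg23 k (0 : A ⊗[k] A) = 0 := map_zero _

@[simp] lemma leg12_add (u v : A ⊗[k] A) : leg12 k (u + v) = leg12 k u + leg12 k v :=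
  add_tmul u v 1

@[simp] lemma leg13_add (u v : A ⊗[k] A) : leg13 k (u + v) = leg13 k u + leg13 k v :=
  map_add _ u v

@[simp] lemma leg23_add (u v : A ⊗[k] A) : leg23 k (u + v) = leg23 k u + leg23 k v :=
  map_add _ u v

@[simp] lemma legOp_tmul (a b : A) : legOp (k := k) (a ⊗ₜ[k] b) = a ⊗ₜ[k] op b := rfl

@[simp] lemma legOp_zero : legOp (k := k) (0 : A ⊗[k] A) = 0 := map_zero _

@[simp] lemma legOp_add (u v : A ⊗[k] A) : legOp (k := k) (u + v) = legOp u + legOp v :=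
  map_add _ u v

lemma sliceFst_dualDistrib_leg13_mul_leg23 (ω η : Module.Dual k A) (u v : A ⊗[k] A) :
    sliceFst (dualDistrib k A A (ω ⊗ₜ η)) (leg13 k u * leg23 k v) =
      sliceFst ω u * sliceFst η v := by
  induction u using TensorProduct.induction_on with
  | zero => simp
  | add u₁ u₂ h₁ h₂ => simp only [leg13_add, add_mul, map_add, h₁, h₂]
  | tmul a b =>
    induction v using TensorProduct.induction_on with
    | zero => simp
    | add v₁ v₂ h₁ h₂ => simp only [leg23_add, mul_add, map_add, h₁, h₂]
    | tmul c d => simp [smul_smul, mul_comm]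

lemma sliceSnd_dualDistrib_assoc_leg13_mul_leg12 (η η' : Module.Dual k A) (u v : A ⊗[k] A) :
    sliceSnd (dualDistrib k A A (η ⊗ₜ η'))
      (Algebra.TensorProduct.assoc k k k A A A (leg13 k u * leg12 k v)) =
      sliceSnd η' u * sliceSnd η v := by
  induction u using TensorProduct.induction_on with
  | zero => simp
  | add u₁ u₂ h₁ h₂ => simp only [leg13_add, add_mul, map_add, h₁, h₂]
  | tmul a b =>
    induction v using TensorProduct.induction_on with
    | zero => simp
    | add v₁ v₂ h₁ h₂ => simp only [leg12_add, mul_add, map_add, h₁, h₂]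
    | tmul c d => simp [smul_smul]

lemma Ul_mul_Ul_le (R : A ⊗[k] A)
    (hR : Algebra.TensorProduct.map (Bialgebra.comulAlgHom k A) (AlgHom.id k A) R =
      leg13 k R * leg23 k R) :
    Ul k R * Ul k R ≤ Ul k R := by
  refine span_mul_span_le ?_
  rintro _ ⟨ω, rfl⟩ _ ⟨η, rfl⟩
  have h : sliceFst ω R * sliceFst η R =
      sliceFst (dualDistrib k A A (ω ⊗ₜ η) ∘ₗ Coalgebra.comul) R := by
    rw [← sliceFst_rTensor, ← sliceFst_dualDistrib_leg13_mul_leg23, ← hR]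
    rfl
  exact h ▸ sliceFst_mem_Ul _ _

lemma Ur_mul_Ur_le (R : A ⊗[k] A)
    (hR : (Algebra.TensorProduct.assoc k k k A A A).symm
        (Algebra.TensorProduct.map (AlgHom.id k A) (Bialgebra.comulAlgHom k A) R) =
      leg13 k R * leg12 k R) :
    Ur k R * Ur k R ≤ Ur k R := by
  refine span_mul_span_le ?_
  rintro _ ⟨η', rfl⟩ _ ⟨η, rfl⟩
  have h : sliceSnd η' R * sliceSnd η R =
      sliceSnd (dualDistrib k A A (η ⊗ₜ η') ∘ₗ Coalgebra.comul) R := by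
    rw [← sliceSnd_lTensor, ← sliceSnd_dualDistrib_assoc_leg13_mul_leg12, ← hR,
      AlgEquiv.apply_symm_apply]
    rfl
  exact h ▸ sliceSnd_mem_Ur _ _

noncomputable def counitFst : A ⊗[k] A →ₐ[k] A :=
  (Algebra.TensorProduct.lid k A).toAlgHom.comp
    (Algebra.TensorProduct.map (Bialgebra.counitAlgHom k A) (AlgHom.id k A))

noncomputable def counitSnd : A ⊗[k] A →ₐ[k] A :=
  (Algebra.TensorProduct.rid k k A).toAlgHom.comp
    (Algebra.TensorProduct.map (AlgHom.id k A) (Bialgebra.counitAlgHom k A))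

lemma counitFst_apply (t : A ⊗[k] A) : counitFst t = sliceFst Coalgebra.counit t := rfl

lemma counitSnd_apply (t : A ⊗[k] A) : counitSnd t = sliceSnd Coalgebra.counit t := rfl

@[simp] lemma sliceFst_counit_comul (a : A) :
    sliceFst Coalgebra.counit (Coalgebra.comul (R := k) a) = a := by
  simp [sliceFst, Coalgebra.rTensor_counit_comul]

@[simp] lemma sliceSnd_counit_comul (a : A) :
    sliceSnd Coalgebra.counit (Coalgebra.comul (R := k) a) = a := by
  simp [sliceSnd, Coalgebra.lTensor_counit_comul]

lemma one_mem_Ul (R : (A ⊗[k] A)ˣ)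
    (hR : Algebra.TensorProduct.map (Bialgebra.comulAlgHom k A) (AlgHom.id k A) (R : A ⊗[k] A) =
      leg13 k (R : A ⊗[k] A) * leg23 k (R : A ⊗[k] A)) :
    (1 : A) ∈ Ul k (R : A ⊗[k] A) := by
  set ψ := counitFst.comp (Algebra.TensorProduct.map counitFst (AlgHom.id k A))
  have hcomul : ∀ t, ψ (Algebra.TensorProduct.map (Bialgebra.comulAlgHom k A) (AlgHom.id k A) t) =
      counitFst t := fun t => by
    induction t using TensorProduct.induction_on <;> simp_all [ψ, counitFst_apply]
  have h13 : ∀ t, ψ (leg13 k t) = counitFst t := fun t => by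
    induction t using TensorProduct.induction_on <;> simp_all [ψ, counitFst]
  have h23 : ∀ t, ψ (leg23 k t) = counitFst t := fun t => by
    induction t using TensorProduct.induction_on <;> simp_all [ψ, counitFst]
  have hidem := congrArg ψ hR
  rw [map_mul, hcomul, h13, h23] at hidem
  rw [← (R.isUnit.map counitFst).mul_eq_left.1 hidem.symm, counitFst_apply]
  exact sliceFst_mem_Ul _ _

lemma one_mem_Ur (R : (A ⊗[k] A)ˣ)
    (hR : (Algebra.TensorProduct.assoc k k k A A A).symm
        (Algebra.TensorProduct.map (AlgHom.id k A) (Bialgebra.comulAlgHom k A) (R : A ⊗[k] A)) =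
      leg13 k (R : A ⊗[k] A) * leg12 k (R : A ⊗[k] A)) :
    (1 : A) ∈ Ur k (R : A ⊗[k] A) := by
  set ψ := counitSnd.comp ((Algebra.TensorProduct.map (AlgHom.id k A) counitSnd).comp
    (Algebra.TensorProduct.assoc k k k A A A).toAlgHom)
  have hcomul : ∀ t, ψ ((Algebra.TensorProduct.assoc k k k A A A).symm
      (Algebra.TensorProduct.map (AlgHom.id k A) (Bialgebra.comulAlgHom k A) t)) =
      counitSnd t := fun t => by
    induction t using TensorProduct.induction_on <;> simp_all [ψ, counitSnd_apply]
  have h13 : ∀ t, ψ (leg13 k t) = counitSnd t := fun t => by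
    induction t using TensorProduct.induction_on <;> simp_all [ψ, counitSnd]
  have h12 : ∀ t, ψ (leg12 k t) = counitSnd t := fun t => by
    induction t using TensorProduct.induction_on <;> simp_all [ψ, counitSnd]
  have hidem := congrArg ψ hR
  rw [map_mul, hcomul, h13, h12] at hidem
  rw [← (R.isUnit.map counitSnd).mul_eq_left.1 hidem.symm, counitSnd_apply]
  exact sliceSnd_mem_Ur _ _

noncomputable def opLeg3 : (A ⊗[k] A) ⊗[k] A →ₗ[k] (A ⊗[k] A) ⊗[k] Aᵐᵒᵖ :=
  (opLinearEquiv k).toLinearMap.lTensor (A ⊗[k] A)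

@[simp] lemma opLeg3_tmul (x : A ⊗[k] A) (z : A) :
    opLeg3 (x ⊗ₜ[k] z) = x ⊗ₜ[k] op z := rfl
lemma opLeg3_leg23_mul_leg13_mul_leg12 (u v w : A ⊗[k] A) :
    opLeg3 (leg23 k v * leg13 k u * leg12 k w) =
      embed13 (legOp u) * embed23 (legOp v) * (w ⊗ₜ[k] (1 : Aᵐᵒᵖ)) := by
  induction u using TensorProduct.induction_on with
  | zero => simp
  | add u₁ u₂ h₁ h₂ => simp only [leg13_add, legOp_add, mul_add, add_mul, map_add, h₁, h₂]
  | tmul a b =>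
    induction v using TensorProduct.induction_on with
    | zero => simp
    | add v₁ v₂ h₁ h₂ => simp only [leg23_add, legOp_add, mul_add, add_mul, map_add, h₁, h₂]
    | tmul c d =>
      induction w using TensorProduct.induction_on with
      | zero => simp
      | add w₁ w₂ h₁ h₂ => simp only [leg12_add, add_tmul, mul_add, map_add, h₁, h₂]
      | tmul e f => simp

lemma opLeg3_leg12_mul_leg13_mul_leg23 (u v w : A ⊗[k] A) :
    opLeg3 (leg12 k w * leg13 k u * leg23 k v) =
      (w ⊗ₜ[k] (1 : Aᵐᵒᵖ)) * embed23 (legOp v) * embed13 (legOp u) := by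
  induction u using TensorProduct.induction_on with
  | zero => simp
  | add u₁ u₂ h₁ h₂ => simp only [leg13_add, legOp_add, mul_add, add_mul, map_add, h₁, h₂]
  | tmul a b =>
    induction v using TensorProduct.induction_on with
    | zero => simp
    | add v₁ v₂ h₁ h₂ => simp only [leg23_add, legOp_add, mul_add, add_mul, map_add, h₁, h₂]
    | tmul c d =>
      induction w using TensorProduct.induction_on with
      | zero => simp
      | add w₁ w₂ h₁ h₂ => simp only [leg12_add, add_tmul, add_mul, map_add, h₁, h₂]
      | tmul e f => simp

lemma embed23_legOp_mul_tmul_one (R : A ⊗[k] A)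
    (hYB : leg12 k R * leg13 k R * leg23 k R = leg23 k R * leg13 k R * leg12 k R)
    {S : A ⊗[k] Aᵐᵒᵖ} (hS : S * legOp R = 1) :
    embed23 (legOp R) * (R ⊗ₜ[k] (1 : Aᵐᵒᵖ)) =
      embed13 S * ((R ⊗ₜ[k] (1 : Aᵐᵒᵖ)) * embed23 (legOp R)) * embed13 (legOp R) := by
  have hYB' := congrArg opLeg3 hYB
  rw [opLeg3_leg12_mul_leg13_mul_leg23, opLeg3_leg23_mul_leg13_mul_leg12] at hYB'
  have hinv : embed13 S * embed13 (legOp R) = (1 : (A ⊗[k] A) ⊗[k] Aᵐᵒᵖ) := by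
    rw [← map_mul, hS, map_one]
  calc embed23 (legOp R) * (R ⊗ₜ[k] (1 : Aᵐᵒᵖ))
      = embed13 S * embed13 (legOp R) * (embed23 (legOp R) * (R ⊗ₜ[k] 1)) := by
        rw [hinv, one_mul]
    _ = embed13 S * ((R ⊗ₜ[k] 1) * embed23 (legOp R) * embed13 (legOp R)) := by
        rw [hYB']; simp only [mul_assoc]
    _ = _ := by simp only [mul_assoc]

lemma sliceFst_rightComm_embed23_mul_tmul_one (ω : Module.Dual k A)
    (η : Module.Dual k Aᵐᵒᵖ) (u v : A ⊗[k] A) :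
    sliceFst (dualDistrib k A Aᵐᵒᵖ (ω ⊗ₜ η))
        (TensorProduct.rightComm k A A Aᵐᵒᵖ (embed23 (legOp v) * (u ⊗ₜ[k] (1 : Aᵐᵒᵖ)))) =
      sliceSnd (η ∘ₗ (opLinearEquiv k).toLinearMap) v * sliceFst ω u := by
  induction u using TensorProduct.induction_on with
  | zero => simp
  | add u₁ u₂ h₁ h₂ => simp only [add_tmul, mul_add, map_add, h₁, h₂]
  | tmul a b =>
    induction v using TensorProduct.induction_on with
    | zero => simp
    | add v₁ v₂ h₁ h₂ => simp only [legOp_add, add_mul, map_add, h₁, h₂]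
    | tmul c d => simp [smul_smul]

lemma sliceFst_rightComm_tmul_one_mul_embed23 (ω : Module.Dual k A)
    (η : Module.Dual k Aᵐᵒᵖ) (u v : A ⊗[k] A) :
    sliceFst (dualDistrib k A Aᵐᵒᵖ (ω ⊗ₜ η))
        (TensorProduct.rightComm k A A Aᵐᵒᵖ ((u ⊗ₜ[k] (1 : Aᵐᵒᵖ)) * embed23 (legOp v))) =
      sliceFst ω u * sliceSnd (η ∘ₗ (opLinearEquiv k).toLinearMap) v := by
  induction u using TensorProduct.induction_on with
  | zero => simp
  | add u₁ u₂ h₁ h₂ => simp only [add_tmul, add_mul, map_add, h₁, h₂]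
  | tmul a b =>
    induction v using TensorProduct.induction_on with
    | zero => simp
    | add v₁ v₂ h₁ h₂ => simp only [legOp_add, mul_add, map_add, h₁, h₂]
    | tmul c d => simp [smul_smul, mul_comm]

end Bialgebra

section Finite

variable {k A : Type*} [CommRing k] [Semiring A] [Bialgebra k A] [Module.Free k A]
  [Module.Finite k A]

lemma sliceFst_rightComm_tmul_one_mul_embed23_mem (χ : Module.Dual k (A ⊗[k] Aᵐᵒᵖ))
    (u v : A ⊗[k] A) :
    sliceFst χ (TensorProduct.rightComm k A A Aᵐᵒᵖ ((u ⊗ₜ[k] (1 : Aᵐᵒᵖ)) * embed23 (legOp v))) ∈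
      Ul k u * Ur k v := by
  obtain ⟨Φ, rfl⟩ : ∃ Φ, dualDistrib k A Aᵐᵒᵖ Φ = χ := (dualDistribEquiv k A Aᵐᵒᵖ).surjective χ
  induction Φ using TensorProduct.induction_on with
  | zero => simp [sliceFst_zero]
  | add Φ₁ Φ₂ h₁ h₂ => rw [map_add, sliceFst_add]; exact add_mem h₁ h₂
  | tmul ω η =>
    rw [sliceFst_rightComm_tmul_one_mul_embed23]
    exact Submodule.mul_mem_mul (sliceFst_mem_Ul _ _) (sliceSnd_mem_Ur _ _)

theorem Ur_mul_Ul_le_Ul_mul_Ur (R : A ⊗[k] A)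
    (hYB : leg12 k R * leg13 k R * leg23 k R = leg23 k R * leg13 k R * leg12 k R)
    {S : A ⊗[k] Aᵐᵒᵖ} (hS : S * legOp R = 1) :
    Ur k R * Ul k R ≤ Ul k R * Ur k R := by
  refine span_mul_span_le ?_
  rintro _ ⟨η, rfl⟩ _ ⟨ω, rfl⟩
  obtain ⟨η', rfl⟩ : ∃ η' : Module.Dual k Aᵐᵒᵖ, η' ∘ₗ (opLinearEquiv k).toLinearMap = η :=
    ⟨η ∘ₗ (opLinearEquiv k).symm.toLinearMap, rfl⟩
  change sliceSnd _ R * sliceFst ω R ∈ _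
  rw [← sliceFst_rightComm_embed23_mul_tmul_one, embed23_legOp_mul_tmul_one R hYB hS,
    sliceFst_rightComm_embed13_mul_mul]
  exact sliceFst_rightComm_tmul_one_mul_embed23_mem _ R R

end Finite

end RMatrix

theorem stmt_15_general {k A : Type*} [Field k] [Ring A] [HopfAlgebra k A] [FiniteDimensional k A]
    (R : (A ⊗[k] A)ˣ)
    (hhex1 : Algebra.TensorProduct.map (Bialgebra.comulAlgHom k A) (AlgHom.id k A)
        (R : A ⊗[k] A) = leg13 k (R : A ⊗[k] A) * leg23 k (R : A ⊗[k] A))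
    (hhex2 : (Algebra.TensorProduct.assoc k k k A A A).symm
        (Algebra.TensorProduct.map (AlgHom.id k A) (Bialgebra.comulAlgHom k A)
          (R : A ⊗[k] A)) = leg13 k (R : A ⊗[k] A) * leg12 k (R : A ⊗[k] A))
    (hYB : leg12 k (R : A ⊗[k] A) * leg13 k (R : A ⊗[k] A) * leg23 k (R : A ⊗[k] A) =
        leg23 k (R : A ⊗[k] A) * leg13 k (R : A ⊗[k] A) * leg12 k (R : A ⊗[k] A))
    (hinv2 : legOpS (k := k) (R : A ⊗[k] A) * legOp (k := k) (R : A ⊗[k] A) = 1) :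
    Ur k (R : A ⊗[k] A) * Ul k (R : A ⊗[k] A) ≤ Ul k (R : A ⊗[k] A) * Ur k (R : A ⊗[k] A) ∧
    (Ul k (R : A ⊗[k] A) * Ur k (R : A ⊗[k] A)) * (Ul k (R : A ⊗[k] A) * Ur k (R : A ⊗[k] A)) ≤
      Ul k (R : A ⊗[k] A) * Ur k (R : A ⊗[k] A) ∧
    (1 : A) ∈ Ul k (R : A ⊗[k] A) * Ur k (R : A ⊗[k] A) := by
  have hcomm := RMatrix.Ur_mul_Ul_le_Ul_mul_Ur _ hYB hinv2
  refine ⟨hcomm, ?_, ?_⟩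
  · calc Ul k (R : A ⊗[k] A) * Ur k R * (Ul k R * Ur k R)
        = Ul k R * (Ur k R * Ul k R) * Ur k R := by simp only [mul_assoc]
      _ ≤ Ul k R * (Ul k R * Ur k R) * Ur k R := by gcongr
      _ = (Ul k R * Ul k R) * (Ur k R * Ur k R) := by simp only [mul_assoc]
      _ ≤ Ul k R * Ur k R := by
          gcongr
          exacts [RMatrix.Ul_mul_Ul_le _ hhex1, RMatrix.Ur_mul_Ur_le _ hhex2]
  · simpa only [mul_one] using
      Submodule.mul_mem_mul (RMatrix.one_mem_Ul R hhex1) (RMatrix.one_mem_Ur R hhex2)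

/-- In a finite-dimensional quasitriangular Hopf algebra, if the `R`-matrix satisfies the
Yang–Baxter equation and `(id ⊗ S)(R)` is a two-sided inverse of `R` in `A ⊗ Aᵒᵖ`, then
`U_r U_l ⊆ U_l U_r`; hence `U_R = U_l U_r` is a (unital) subalgebra of `A`. -/
theorem stmt_15 {k A : Type*} [Field k] [Ring A] [HopfAlgebra k A] [FiniteDimensional k A]
    (R : (A ⊗[k] A)ˣ)
    (hqt : ∀ a : A, (TensorProduct.comm k A A) (Bialgebra.comulAlgHom k A a) =
        (R : A ⊗[k] A) * Bialgebra.comulAlgHom k A a * ((R⁻¹ : (A ⊗[k] A)ˣ) : A ⊗[k] A))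
    (hhex1 : Algebra.TensorProduct.map (Bialgebra.comulAlgHom k A) (AlgHom.id k A)
        (R : A ⊗[k] A) = leg13 k (R : A ⊗[k] A) * leg23 k (R : A ⊗[k] A))
    (hhex2 : (Algebra.TensorProduct.assoc k k k A A A).symm
        (Algebra.TensorProduct.map (AlgHom.id k A) (Bialgebra.comulAlgHom k A)
          (R : A ⊗[k] A)) = leg13 k (R : A ⊗[k] A) * leg12 k (R : A ⊗[k] A))
    (hYB : leg12 k (R : A ⊗[k] A) * leg13 k (R : A ⊗[k] A) * leg23 k (R : A ⊗[k] A) =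
        leg23 k (R : A ⊗[k] A) * leg13 k (R : A ⊗[k] A) * leg12 k (R : A ⊗[k] A))
    (hinv1 : legOp (k := k) (R : A ⊗[k] A) * legOpS (k := k) (R : A ⊗[k] A) = 1)
    (hinv2 : legOpS (k := k) (R : A ⊗[k] A) * legOp (k := k) (R : A ⊗[k] A) = 1) :
    Ur k (R : A ⊗[k] A) * Ul k (R : A ⊗[k] A) ≤ Ul k (R : A ⊗[k] A) * Ur k (R : A ⊗[k] A) ∧
    (Ul k (R : A ⊗[k] A) * Ur k (R : A ⊗[k] A)) * (Ul k (R : A ⊗[k] A) * Ur k (R : A ⊗[k] A)) ≤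
      Ul k (R : A ⊗[k] A) * Ur k (R : A ⊗[k] A) ∧
    (1 : A) ∈ Ul k (R : A ⊗[k] A) * Ur k (R : A ⊗[k] A) :=
  stmt_15_general R hhex1 hhex2 hYB hinv2
end

section
/- Let d : K → ℝ be a ring homomorphism from the fusion ring K = ⊕_{j∈I} ℤj (with structure constants m_{ij}^k ≥ 0, involution j ↦ j̄, unit e) such that d(j) ≥ 1 and d(j̄) = d(j) for all j. If I is finite, then the vector (d(j))_{j∈I} ∈ ℓ²(I) is an eigenvector with eigenvalue 1 of λ_μ = ∑_j (μ(j)/d(j)) Λ_j for every probability measure μ on I, where Λ_j is the matrix (m_{jk}^i)_{i,k}. Consequently ‖λ_μ‖ = 1 and (K, d) is amenable. -/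
/-!
Frobenius reciprocity turns the row sums of `λ_μ` against `d` into `∑_j μ(j)/d(j) · d(j̄) d(i)`,
and multiplicativity of `d` turns its column sums against `d` into `∑_j μ(j)/d(j) · d(j) d(k)`;
since `d(j̄) = d(j)` and `∑_j μ(j) = 1`, both equal `d`. So `d` is a positive fixed vector of the
nonnegative matrix `λ_μ` and of its transpose, and the Schur test bounds `‖λ_μ‖` by `1`, while the
fixed vector itself gives `‖λ_μ‖ ≥ 1`.
-/

open Finset Matrix

theorem ContinuousLinearMap.one_le_opNorm_of_apply_eq_self {𝕜 E : Type*}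
    [NontriviallyNormedField 𝕜] [NormedAddCommGroup E] [NormedSpace 𝕜 E]
    (T : E →L[𝕜] E) {x : E} (hx : x ≠ 0) (hTx : T x = x) : 1 ≤ ‖T‖ := by
  have h := T.le_opNorm x
  rw [hTx] at h
  exact le_of_mul_le_mul_right (by simpa using h) (norm_pos_iff.mpr hx)

/-- The Schur test with a common test vector. -/
theorem Matrix.norm_toEuclideanCLM_le_one_of_mulVec_le_of_vecMul_le {n : Type*} [Fintype n]
    [DecidableEq n] {A : Matrix n n ℝ} {d : n → ℝ} (hA : ∀ i k, 0 ≤ A i k)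
    (hd : ∀ i, 0 < d i) (hrow : A *ᵥ d ≤ d) (hcol : d ᵥ* A ≤ d) :
    ‖toEuclideanCLM (𝕜 := ℝ) A‖ ≤ 1 := by
  refine ContinuousLinearMap.opNorm_le_bound _ zero_le_one fun x => ?_
  rw [one_mul, EuclideanSpace.norm_eq, EuclideanSpace.norm_eq]
  refine Real.sqrt_le_sqrt ?_
  -- Cauchy–Schwarz with the weights `A i k * d k`.
  have hCS : ∀ i, (∑ k, A i k * x k) ^ 2 ≤ d i * ∑ k, A i k * x k ^ 2 / d k := fun i =>
    calc (∑ k, A i k * x k) ^ 2 ≤ (∑ k, A i k * d k) * ∑ k, A i k * x k ^ 2 / d k :=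
          sum_sq_le_sum_mul_sum_of_sq_le_mul _
            (fun k _ => mul_nonneg (hA i k) (hd k).le)
            (fun k _ => div_nonneg (mul_nonneg (hA i k) (sq_nonneg _)) (hd k).le)
            (fun k _ => le_of_eq (by field_simp [(hd k).ne']))
      _ ≤ d i * ∑ k, A i k * x k ^ 2 / d k :=
          mul_le_mul_of_nonneg_right (hrow i)
            (sum_nonneg fun k _ => div_nonneg (mul_nonneg (hA i k) (sq_nonneg _)) (hd k).le)
  calc ∑ i, ‖(toEuclideanCLM (𝕜 := ℝ) A x) i‖ ^ 2 = ∑ i, (∑ k, A i k * x k) ^ 2 := by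
        simp only [Real.norm_eq_abs, sq_abs]; rfl
    _ ≤ ∑ i, d i * ∑ k, A i k * x k ^ 2 / d k := sum_le_sum fun i _ => hCS i
    _ = ∑ k, x k ^ 2 / d k * (d ᵥ* A) k := by
        simp only [vecMul, dotProduct, mul_sum]
        rw [sum_comm]
        exact sum_congr rfl fun k _ => sum_congr rfl fun i _ => by ring
    _ ≤ ∑ k, x k ^ 2 / d k * d k :=
        sum_le_sum fun k _ => mul_le_mul_of_nonneg_left (hcol k)
          (div_nonneg (sq_nonneg _) (hd k).le)
    _ = ∑ k, ‖x k‖ ^ 2 := sum_congr rfl fun k _ => by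
        rw [div_mul_cancel₀ _ (hd k).ne', Real.norm_eq_abs, sq_abs]

/-- The matrix `λ_μ = ∑_j (μ(j)/d(j)) Λ_j`, where `(Λ_j)_{ik} = m_{jk}^i`. -/
noncomputable def fusionMarkovMatrix {I : Type*} [Fintype I] (m : I → I → I → ℕ) (d μ : I → ℝ) :
    Matrix I I ℝ :=
  Matrix.of fun i k => ∑ j, μ j / d j * (m j k i : ℝ)

section FusionMarkovMatrix

variable {I : Type*} [Fintype I] {m : I → I → I → ℕ} {d μ : I → ℝ}

theorem fusionMarkovMatrix_nonneg (hd : ∀ j, 0 ≤ d j) (hμ : ∀ j, 0 ≤ μ j) (i k : I) :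
    0 ≤ fusionMarkovMatrix m d μ i k :=
  sum_nonneg fun j _ => mul_nonneg (div_nonneg (hμ j) (hd j)) (Nat.cast_nonneg _)

theorem sum_div_mul_mul_self_eq (hd : ∀ j, d j ≠ 0) (hμ1 : ∑ j, μ j = 1) (c : ℝ) :
    ∑ j, μ j / d j * (d j * c) = c := by
  calc ∑ j, μ j / d j * (d j * c) = ∑ j, μ j * c :=
        sum_congr rfl fun j _ => by field_simp [hd j]
    _ = c := by rw [← sum_mul, hμ1, one_mul]

theorem fusionMarkovMatrix_mulVec_apply (x : I → ℝ) (i : I) :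
    (fusionMarkovMatrix m d μ *ᵥ x) i = ∑ j, μ j / d j * ∑ k, (m j k i : ℝ) * x k := by
  simp only [fusionMarkovMatrix, mulVec, dotProduct, of_apply, sum_mul, mul_sum, mul_assoc]
  exact sum_comm

theorem vecMul_fusionMarkovMatrix_apply (x : I → ℝ) (k : I) :
    (x ᵥ* fusionMarkovMatrix m d μ) k = ∑ j, μ j / d j * ∑ i, (m j k i : ℝ) * x i := by
  simp only [fusionMarkovMatrix, vecMul, dotProduct, of_apply, mul_sum]
  rw [sum_comm]
  exact sum_congr rfl fun j _ => sum_congr rfl fun i _ => by ring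

theorem fusionMarkovMatrix_mulVec_self (bar : I → I) (hd : ∀ j, d j ≠ 0)
    (hdbar : ∀ j, d (bar j) = d j) (hdmul : ∀ i j, d i * d j = ∑ k, (m i j k : ℝ) * d k)
    (hfrob : ∀ j k i, m j k i = m (bar j) i k) (hμ1 : ∑ j, μ j = 1) :
    fusionMarkovMatrix m d μ *ᵥ d = d := by
  funext i
  calc (fusionMarkovMatrix m d μ *ᵥ d) i = ∑ j, μ j / d j * (d (bar j) * d i) := by
        rw [fusionMarkovMatrix_mulVec_apply]
        exact sum_congr rfl fun j _ => by rw [hdmul (bar j) i]; simp only [hfrob j]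
    _ = d i := by simp only [hdbar, sum_div_mul_mul_self_eq hd hμ1]

theorem vecMul_fusionMarkovMatrix_self (hd : ∀ j, d j ≠ 0)
    (hdmul : ∀ i j, d i * d j = ∑ k, (m i j k : ℝ) * d k) (hμ1 : ∑ j, μ j = 1) :
    d ᵥ* fusionMarkovMatrix m d μ = d := by
  funext k
  calc (d ᵥ* fusionMarkovMatrix m d μ) k = ∑ j, μ j / d j * (d j * d k) := by
        simp only [vecMul_fusionMarkovMatrix_apply, ← hdmul]
    _ = d k := sum_div_mul_mul_self_eq hd hμ1 _

end FusionMarkovMatrix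

theorem stmt_18_general {I : Type*} [Fintype I] [DecidableEq I]
    (m : I → I → I → ℕ) (bar : I → I) (d : I → ℝ)
    (hd1 : ∀ j, 1 ≤ d j) (hdbar : ∀ j, d (bar j) = d j)
    (hdmul : ∀ i j, d i * d j = ∑ k, (m i j k : ℝ) * d k)
    (hfrob : ∀ j k i, m j k i = m (bar j) i k)
    (μ : I → ℝ) (hμ : ∀ j, 0 ≤ μ j) (hμ1 : ∑ j, μ j = 1) :
    (Matrix.of fun i k => ∑ j, μ j / d j * (m j k i : ℝ)).mulVec d = d ∧
    ‖Matrix.toEuclideanCLM (𝕜 := ℝ)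
        (Matrix.of fun i k => ∑ j, μ j / d j * (m j k i : ℝ))‖ = 1 := by
  have hd : ∀ j, 0 < d j := fun j => one_pos.trans_le (hd1 j)
  have hrow : fusionMarkovMatrix m d μ *ᵥ d = d :=
    fusionMarkovMatrix_mulVec_self bar (fun j => (hd j).ne') hdbar hdmul hfrob hμ1
  have hcol : d ᵥ* fusionMarkovMatrix m d μ = d :=
    vecMul_fusionMarkovMatrix_self (fun j => (hd j).ne') hdmul hμ1
  obtain ⟨j, -, -⟩ := exists_ne_zero_of_sum_ne_zero (hμ1.trans_ne one_ne_zero)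
  have hd_ne : WithLp.toLp 2 d ≠ 0 := fun h => (hd j).ne' (congrFun (congrArg WithLp.ofLp h) j)
  refine ⟨hrow, le_antisymm ?_ ?_⟩
  · exact norm_toEuclideanCLM_le_one_of_mulVec_le_of_vecMul_le
      (fusionMarkovMatrix_nonneg (fun j => (hd j).le) hμ) hd hrow.le hcol.le
  · exact ContinuousLinearMap.one_le_opNorm_of_apply_eq_self _ hd_ne
      (by rw [toEuclideanCLM_toLp]; exact congrArg _ hrow)

/-- For a finite fusion ring with dimension function `d`, the vector `(d(j))_j` is an
eigenvector with eigenvalue `1` of `λ_μ = ∑_j (μ(j)/d(j)) Λ_j` for every probability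
measure `μ`, and consequently `‖λ_μ‖ = 1` (so `(K, d)` is amenable). -/
theorem stmt_18 {I : Type*} [Fintype I] [DecidableEq I]
    (m : I → I → I → ℕ) (e : I) (bar : I → I) (d : I → ℝ)
    (hd1 : ∀ j, 1 ≤ d j) (hdbar : ∀ j, d (bar j) = d j)
    (hdmul : ∀ i j, d i * d j = ∑ k, (m i j k : ℝ) * d k)
    (hfrob : ∀ j k i, m j k i = m (bar j) i k)
    (hunit : ∀ i j, m e i j = if i = j then 1 else 0)
    (μ : I → ℝ) (hμ : ∀ j, 0 ≤ μ j) (hμ1 : ∑ j, μ j = 1) :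
    (Matrix.of fun i k => ∑ j, μ j / d j * (m j k i : ℝ)).mulVec d = d ∧
    ‖Matrix.toEuclideanCLM (𝕜 := ℝ)
        (Matrix.of fun i k => ∑ j, μ j / d j * (m j k i : ℝ))‖ = 1 :=
  stmt_18_general m bar d hd1 hdbar hdmul hfrob μ hμ hμ1
end
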